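/- arXiv:1410.0230 — 10 statements merged into one kernel-verified Lean document; each statement's English description precedes it below -/
import Mathlib

section
/- Let π be a permutation of length n avoiding the pattern 2143, and let ℓ be the number of leading maxima of π (the largest index i such that positions 1,…,i are all left-to-right maxima). Then for every index i that is not a left-to-right maximum of π, we have π(ℓ) > π(i). Equivalently, the set of values of π at left-to-right maximum positions ≥ ℓ is exactly {π(ℓ), π(ℓ)+1, …, n}. -/
/-- A pattern `τ` (a word on `Fin k`) occurs in the permutation `π` of length `n`. -/
def Contains {k n : ℕ} (τ : Fin k → Fin k) (π : Equiv.Perm (Fin n)) : Prop :=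
  ∃ f : Fin k → Fin n, StrictMono f ∧ ∀ i j : Fin k, τ i < τ j ↔ π (f i) < π (f j)

/-- The permutation `π` avoids the pattern `τ`. -/
def Avoids {k n : ℕ} (τ : Fin k → Fin k) (π : Equiv.Perm (Fin n)) : Prop :=
  ¬ Contains τ π

def pat132 : Fin 3 → Fin 3 := ![0, 2, 1]
def pat2143 : Fin 4 → Fin 4 := ![1, 0, 3, 2]
def pat3142 : Fin 4 → Fin 4 := ![2, 0, 3, 1]
def pat4132 : Fin 4 → Fin 4 := ![3, 0, 2, 1]
def pat2413 : Fin 4 → Fin 4 := ![1, 3, 0, 2]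
def pat263514 : Fin 6 → Fin 6 := ![1, 5, 2, 4, 0, 3]

/-- `i` is a left-to-right maximum of `π`. -/
def IsLRMax {n : ℕ} (π : Equiv.Perm (Fin n)) (i : Fin n) : Prop :=
  ∀ j, j < i → π j < π i

/-- `i` is a leading maximum of `π`: all positions up to `i` are LR-maxima. -/
def IsLeadingMax {n : ℕ} (π : Equiv.Perm (Fin n)) (i : Fin n) : Prop :=
  ∀ j, j ≤ i → IsLRMax π j

/-- `ℓ(π)`, the number of leading maxima of `π`. -/
noncomputable def numLeading {n : ℕ} (π : Equiv.Perm (Fin n)) : ℕ :=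
  Set.ncard {i : Fin n | IsLeadingMax π i}

lemma ncard_Iic {n : ℕ} (b : Fin n) : (Set.Iic b).ncard = (b : ℕ) + 1 := by
  rw [Set.ncard_eq_toFinset_card', Set.toFinset_Iic, Fin.card_Iic]

lemma ncard_Iio {n : ℕ} (b : Fin n) : (Set.Iio b).ncard = (b : ℕ) := by
  rw [Set.ncard_eq_toFinset_card', Set.toFinset_Iio, Fin.card_Iio]

lemma leading_dc {n : ℕ} (π : Equiv.Perm (Fin n)) {i j : Fin n}
    (h : IsLeadingMax π i) (hji : j ≤ i) : IsLeadingMax π j :=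
  fun k hk => h k (hk.trans hji)


lemma smono4 {α : Type*} [Preorder α] {a b c d : α} (h1 : a < b) (h2 : b < c) (h3 : c < d) :
    StrictMono ![a, b, c, d] := by
  intro x y hxy
  fin_cases x <;> fin_cases y <;>
    simp only [Fin.mk_lt_mk, Matrix.cons_val_zero, Matrix.cons_val_one, Matrix.head_cons,
      Matrix.cons_val_two, Matrix.tail_cons, Matrix.cons_val_three, Matrix.head_fin_const] at hxy ⊢ <;>
    first
      | omega
      | exact h1 | exact h2 | exact h3
      | exact h1.trans h2 | exact h2.trans h3 | exact (h1.trans h2).trans h3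

lemma pat2143_cond {n : ℕ} (π : Equiv.Perm (Fin n)) (p q r t : Fin n)
    (v21 : π q < π p) (v14 : π p < π t) (v43 : π t < π r) :
    ∀ x y : Fin 4, pat2143 x < pat2143 y ↔ π (![p, q, r, t] x) < π (![p, q, r, t] y) := by
  have h1 : π q < π p := v21
  have h2 : π p < π t := v14
  have h3 : π t < π r := v43
  have h4 : π q < π t := h1.trans h2
  have h5 : π q < π r := h4.trans h3
  have h6 : π p < π r := h2.trans h3
  intro x y
  fin_cases x <;> fin_cases y <;>
    simp only [pat2143, Matrix.cons_val_zero, Matrix.cons_val_one, Matrix.head_cons,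
      Matrix.cons_val_two, Matrix.tail_cons, Matrix.cons_val_three, Matrix.head_fin_const] <;>
    constructor <;> intro hh <;>
    first
      | exact h1 | exact h2 | exact h3 | exact h4 | exact h5 | exact h6
      | exact absurd hh (by decide)
      | exact absurd hh (lt_irrefl _)
      | exact absurd hh (asymm h1) | exact absurd hh (asymm h2) | exact absurd hh (asymm h3)
      | exact absurd hh (asymm h4) | exact absurd hh (asymm h5) | exact absurd hh (asymm h6)
      | decide

theorem stmt0 {n : ℕ} (π : Equiv.Perm (Fin n)) (hav : Avoids pat2143 π)
    (lm : Fin n) (hlm : (lm : ℕ) + 1 = numLeading π) :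
    (∀ i : Fin n, ¬ IsLRMax π i → π i < π lm) ∧
    {v : Fin n | ∃ j : Fin n, IsLRMax π j ∧ lm ≤ j ∧ π j = v} = Set.Ici (π lm) := by
  set S : Set (Fin n) := {i : Fin n | IsLeadingMax π i} with hS
  -- lm is a leading maximum
  have hlmS : lm ∈ S := by
    by_contra h
    have hsub : S ⊆ Set.Iio lm := by
      intro s hs
      by_contra hs'
      exact h (leading_dc π hs (not_lt.mp hs'))
    have := Set.ncard_le_ncard hsub (Set.toFinite _)
    rw [ncard_Iio] at this
    have : numLeading π ≤ (lm : ℕ) := this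
    omega
  have hlead : ∀ j : Fin n, j ≤ lm → IsLRMax π j := hlmS
  -- nothing above lm is a leading maximum
  have hnot : ∀ j : Fin n, lm < j → ¬ IsLeadingMax π j := by
    intro j hj hcontra
    have hsub : Set.Iic j ⊆ S := fun k hk => leading_dc π hcontra hk
    have := Set.ncard_le_ncard hsub (Set.toFinite _)
    rw [ncard_Iic] at this
    have h2 : (j : ℕ) + 1 ≤ numLeading π := this
    have : (lm : ℕ) < (j : ℕ) := hj
    omega
  -- values at positions ≤ lm are ≤ π lm
  have hle : ∀ a : Fin n, a ≤ lm → π a ≤ π lm := by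
    intro a ha
    rcases lt_or_eq_of_le ha with h | h
    · exact le_of_lt (hlead lm le_rfl a h)
    · rw [h]
  -- the successor of lm (when it exists) has small value
  have hsucc : ∀ h : (lm : ℕ) + 1 < n, π ⟨(lm : ℕ) + 1, h⟩ < π lm := by
    intro h
    set s : Fin n := ⟨(lm : ℕ) + 1, h⟩ with hs'
    have hlt : lm < s := by simp [hs', Fin.lt_def]
    have hnl : ¬ IsLeadingMax π s := hnot s hlt
    have hnLR : ¬ IsLRMax π s := by
      intro hLR
      apply hnl
      intro j hj
      rcases lt_or_eq_of_le hj with h1 | h1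
      · have : j ≤ lm := by
          rw [Fin.le_def]; have := Fin.lt_def.mp h1; simp [hs'] at this; omega
        exact hlead j this
      · rw [h1]; exact hLR
    obtain ⟨a, hav'⟩ := not_forall.mp hnLR
    obtain ⟨halt, hale⟩ := Classical.not_imp.mp hav'
    have haLM : a ≤ lm := by
      rw [Fin.le_def]; have := Fin.lt_def.mp halt; simp [hs'] at this; omega
    have h1 : π s ≤ π a := not_lt.mp hale
    have h2 : π a ≤ π lm := hle a haLM
    have hne : π s ≠ π lm := fun hh => hlt.ne' (π.injective hh)
    exact lt_of_le_of_ne (h1.trans h2) hne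
  have part1 : ∀ i : Fin n, ¬ IsLRMax π i → π i < π lm := by
    intro i hi
    -- i > lm
    have hilm : lm < i := by
      by_contra h
      exact hi (hlead i (not_lt.mp h))
    have hn1 : (lm : ℕ) + 1 < n := lt_of_le_of_lt (Fin.lt_def.mp hilm) i.isLt
    set s : Fin n := ⟨(lm : ℕ) + 1, hn1⟩ with hs'
    have hslt : π s < π lm := hsucc hn1
    have hsle : s ≤ i := by rw [Fin.le_def]; have := Fin.lt_def.mp hilm; simp [hs']; omega
    rcases lt_or_eq_of_le hsle with hsi | hsi
    · -- s < i : main case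
      by_contra hcon
      have hlmi : π lm < π i := by
        have h1 : π lm ≤ π i := not_lt.mp hcon
        have hne : π lm ≠ π i := fun hh => (ne_of_lt hilm) (π.injective hh)
        exact lt_of_le_of_ne h1 hne
      obtain ⟨a, hav'⟩ := not_forall.mp hi
      obtain ⟨hai, hale⟩ := Classical.not_imp.mp hav'
      have hia : π i < π a := by
        have h1 : π i ≤ π a := not_lt.mp hale
        have hne : π i ≠ π a := fun hh => (ne_of_lt hai) (π.injective hh).symm
        exact lt_of_le_of_ne h1 hne
      -- a > s
      have hsa : s < a := by
        by_contra h
        have h' : a ≤ s := not_lt.mp h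
        rcases lt_or_eq_of_le h' with h1 | h1
        · have halm : a ≤ lm := by
            rw [Fin.le_def]; have := Fin.lt_def.mp h1; simp [hs'] at this; omega
          have hle' : π a ≤ π lm := hle a halm
          exact absurd (hlmi.trans hia) (not_lt.mpr hle')
        · rw [h1] at hia
          exact absurd (hia.trans (hslt.trans hlmi)) (lt_irrefl _)
      -- build the 2143 pattern on lm < s < a < i
      apply hav
      refine ⟨![lm, s, a, i], ?_, ?_⟩
      · exact smono4 (by simp [hs', Fin.lt_def]) hsa hai
      · exact pat2143_cond π lm s a i hslt hlmi hia
    · rw [← hsi]; exact hslt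
  refine ⟨part1, ?_⟩
  ext v
  simp only [Set.mem_setOf_eq, Set.mem_Ici]
  constructor
  · rintro ⟨j, hjLR, hjge, rfl⟩
    rcases lt_or_eq_of_le hjge with h | h
    · exact le_of_lt (hjLR lm h)
    · rw [h]
  · intro hv
    rcases lt_or_eq_of_le hv with h | h
    · refine ⟨π.symm v, ?_, ?_, π.apply_symm_apply v⟩
      · by_contra hc
        have := part1 _ hc
        rw [π.apply_symm_apply] at this
        exact absurd h (not_lt.mpr (le_of_lt this))
      · by_contra hc
        have h1 : π.symm v ≤ lm := le_of_lt (not_le.mp hc)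
        have := hle _ h1
        rw [π.apply_symm_apply] at this
        exact absurd h (not_lt.mpr this)
    · exact ⟨lm, hlead lm le_rfl, le_rfl, h⟩
end

section
/- Let π be a permutation avoiding 2143 and 3142. Let i < j be two horizontal gaps of π, let x be an index with i < x and x not an LR-maximum and x less than the next horizontal gap after i, and likewise let y be an index in the j-th gap region (j < y, y not an LR-maximum, y less than the next horizontal gap after j). Then π(x) > π(y). In other words, the non-LR-maximum entries between consecutive horizontal gaps form blocks arranged in a skew-sum (decreasing) pattern. -/
/-- `i` is a horizontal gap of `π`: an LR-maximum that is also a descent. -/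
def IsHorizGap {n : ℕ} (π : Equiv.Perm (Fin n)) (i : Fin n) : Prop :=
  IsLRMax π i ∧ ∃ h : (i : ℕ) + 1 < n, π ⟨(i : ℕ) + 1, h⟩ < π i

/-- `x` lies in the gap region following the horizontal gap `g`: it is a
non-LR-maximum position after `g` and before the next horizontal gap. -/
def InGapRegion {n : ℕ} (π : Equiv.Perm (Fin n)) (g x : Fin n) : Prop :=
  g < x ∧ ¬ IsLRMax π x ∧ ∀ g' : Fin n, IsHorizGap π g' → g < g' → x < g'

/-!
Suppose `x < y` with `π x < π y`. Since `x` is not an LR-maximum, some `a < x` has `π x < π a`; let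
`q` be the position of the largest value before `y`. As `j` is an LR-maximum with `x < j < y`, we get
`j ≤ q` and `π a < π j ≤ π q`, while `π y < π q` because `y` is not an LR-maximum. So `a, x, q, y`
has its second entry smallest and its third largest, which is a `2143` or a `3142` according to
whether `π a < π y`.
-/

namespace Equiv.Perm

variable {n : ℕ} (π : Equiv.Perm (Fin n))

theorem contains_of_strictMono {k : ℕ} {τ : Fin k → Fin k} {f g : Fin k → Fin n}
    (hf : StrictMono f) (hg : StrictMono g) (hπ : ∀ i, π (f i) = g (τ i)) : Contains τ π :=
  ⟨f, hf, fun i j => by rw [hπ, hπ, hg.lt_iff_lt]⟩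

theorem contains_pat2143 {a b c d : Fin n} (hab : a < b) (hbc : b < c) (hcd : c < d)
    (hba : π b < π a) (had : π a < π d) (hdc : π d < π c) : Contains pat2143 π :=
  π.contains_of_strictMono (((strictMono_vecEmpty.vecCons hcd).vecCons hbc).vecCons hab)
    (((strictMono_vecEmpty.vecCons hdc).vecCons had).vecCons hba) (by intro i; fin_cases i <;> rfl)

theorem contains_pat3142 {a b c d : Fin n} (hab : a < b) (hbc : b < c) (hcd : c < d)
    (hbd : π b < π d) (hda : π d < π a) (hac : π a < π c) : Contains pat3142 π :=
  π.contains_of_strictMono (((strictMono_vecEmpty.vecCons hcd).vecCons hbc).vecCons hab)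
    (((strictMono_vecEmpty.vecCons hac).vecCons hda).vecCons hbd) (by intro i; fin_cases i <;> rfl)

theorem exists_lt_of_not_isLRMax {x : Fin n} (hx : ¬ IsLRMax π x) : ∃ a < x, π x < π a := by
  simp only [IsLRMax, not_forall, not_lt] at hx
  obtain ⟨a, hax, hxa⟩ := hx
  exact ⟨a, hax, hxa.lt_of_ne (π.injective.ne hax.ne')⟩

theorem exists_max_of_lt {x y : Fin n} (hxy : x < y) : ∃ q < y, ∀ a < y, π a ≤ π q := by
  obtain ⟨q, hq, hmax⟩ := Finset.exists_max_image {a | a < y} π ⟨x, by simpa using hxy⟩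
  exact ⟨q, by simpa using hq, fun a ha => hmax a (by simpa using ha)⟩

end Equiv.Perm

theorem stmt2_general {n : ℕ} (π : Equiv.Perm (Fin n))
    (h2143 : Avoids pat2143 π) (h3142 : Avoids pat3142 π)
    (i j x y : Fin n) (hj : IsHorizGap π j) (hij : i < j)
    (hx : InGapRegion π i x) (hy : InGapRegion π j y) :
    π y < π x := by
  obtain ⟨-, hx_not_max, hx_before⟩ := hx
  obtain ⟨hjy, hy_not_max, -⟩ := hy
  have hxj : x < j := hx_before j hj hij
  obtain ⟨a, hax, hxa⟩ := π.exists_lt_of_not_isLRMax hx_not_max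
  obtain ⟨b, hby, hyb⟩ := π.exists_lt_of_not_isLRMax hy_not_max
  obtain ⟨q, hqy, hq_max⟩ := π.exists_max_of_lt hjy
  have hjq : j ≤ q := le_of_not_gt fun hqj => (hq_max j hjy).not_gt (hj.1 q hqj)
  have haq : π a < π q := (hj.1 a (hax.trans hxj)).trans_le (hq_max j hjy)
  have hyq : π y < π q := hyb.trans_le (hq_max b hby)
  have hxq : x < q := hxj.trans_le hjq
  by_contra! hxy_le
  have hxy : π x < π y := hxy_le.lt_of_ne (π.injective.ne (hxq.trans hqy).ne)
  rcases lt_or_gt_of_ne (π.injective.ne (hax.trans (hxq.trans hqy)).ne) with hay | hya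
  · exact h2143 (π.contains_pat2143 hax hxq hqy hxa hay hyq)
  · exact h3142 (π.contains_pat3142 hax hxq hqy hxy hya haq)

theorem stmt2 {n : ℕ} (π : Equiv.Perm (Fin n))
    (h2143 : Avoids pat2143 π) (h3142 : Avoids pat3142 π)
    (i j x y : Fin n) (hi : IsHorizGap π i) (hj : IsHorizGap π j) (hij : i < j)
    (hx : InGapRegion π i x) (hy : InGapRegion π j y) :
    π y < π x :=
  stmt2_general π h2143 h3142 i j x y hj hij hx hy
end

section
/- A permutation π avoids all three patterns 2143, 3142, and 4132 if and only if the permutation obtained from π by deleting all entries at leading-maximum positions (and renormalizing values) avoids the pattern 132. -/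
lemma sm4 {n : ℕ} {a b c d : Fin n} (h1 : a < b) (h2 : b < c) (h3 : c < d) :
    StrictMono ![a, b, c, d] := by
  intro i j hij
  fin_cases i <;> fin_cases j <;>
    simp only [Matrix.cons_val_zero, Matrix.cons_val_one, Matrix.head_cons,
      Matrix.cons_val_two, Matrix.tail_cons, Matrix.cons_val_three] <;>
    first
      | exact absurd hij (by decide)
      | exact h1
      | exact h2
      | exact h3
      | exact h1.trans h2
      | exact h2.trans h3
      | exact (h1.trans h2).trans h3

lemma notLeading_iff {n : ℕ} (π : Equiv.Perm (Fin n)) (x : Fin n) :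
    ¬ IsLeadingMax π x ↔ ∃ a b : Fin n, a < b ∧ b ≤ x ∧ π b < π a := by
  unfold IsLeadingMax IsLRMax
  push_neg
  constructor
  · rintro ⟨j, hj, i, hij, hle⟩
    exact ⟨i, j, hij, hj, lt_of_le_of_ne hle fun h => hij.ne' (π.injective h)⟩
  · rintro ⟨a, b, hab, hbx, hd⟩
    exact ⟨b, hbx, a, hab, hd.le⟩

theorem stmt3 {n : ℕ} (π : Equiv.Perm (Fin n)) :
    (Avoids pat2143 π ∧ Avoids pat3142 π ∧ Avoids pat4132 π) ↔
    ¬ ∃ x y z : Fin n, x < y ∧ y < z ∧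
        ¬ IsLeadingMax π x ∧ ¬ IsLeadingMax π y ∧ ¬ IsLeadingMax π z ∧
        π x < π z ∧ π z < π y := by
  constructor
  · rintro ⟨h1, h2, h3⟩ ⟨x, y, z, hxy, hyz, hx, _, _, hxz, hzy⟩
    rw [notLeading_iff] at hx
    obtain ⟨a0, b0, hab0, hbx0, hd0⟩ := hx
    obtain ⟨a, b, hab, hby, hd, hbz⟩ :
        ∃ a b : Fin n, a < b ∧ b < y ∧ π b < π a ∧ π b < π z := by
      rcases lt_or_ge (π b0) (π z) with h | h
      · exact ⟨a0, b0, hab0, lt_of_le_of_lt hbx0 hxy, hd0, h⟩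
      · have hbx' : b0 < x :=
          lt_of_le_of_ne hbx0 (by rintro rfl; exact absurd hxz (not_lt.2 h))
        exact ⟨b0, x, hbx', hxy, hxz.trans_le h, hxz⟩
    rcases lt_trichotomy (π a) (π z) with haz | haz | haz
    · refine h1 ⟨![a, b, y, z], sm4 hab hby hyz, ?_⟩
      have e1 : π b < π a := hd
      have e2 : π a < π z := haz
      have e3 : π z < π y := hzy
      have p12 := e1.trans e2
      have p23 := e2.trans e3
      have p13 := p12.trans e3
      intro i j
      fin_cases i <;> fin_cases j <;>
        simp only [pat2143, Matrix.cons_val_zero, Matrix.cons_val_one, Matrix.head_cons,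
          Matrix.cons_val_two, Matrix.tail_cons, Matrix.cons_val_three] <;>
        first
          | exact iff_of_true (by decide) e1
          | exact iff_of_true (by decide) e2
          | exact iff_of_true (by decide) e3
          | exact iff_of_true (by decide) p12
          | exact iff_of_true (by decide) p23
          | exact iff_of_true (by decide) p13
          | exact iff_of_false (by decide) (lt_irrefl _)
          | exact iff_of_false (by decide) (asymm e1)
          | exact iff_of_false (by decide) (asymm e2)
          | exact iff_of_false (by decide) (asymm e3)
          | exact iff_of_false (by decide) (asymm p12)
          | exact iff_of_false (by decide) (asymm p23)
          | exact iff_of_false (by decide) (asymm p13)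
    · exact absurd (π.injective haz) (ne_of_lt (hab.trans (hby.trans hyz)))
    · rcases lt_trichotomy (π a) (π y) with hay | hay | hay
      · refine h2 ⟨![a, b, y, z], sm4 hab hby hyz, ?_⟩
        have e1 : π b < π z := hbz
        have e2 : π z < π a := haz
        have e3 : π a < π y := hay
        have p12 := e1.trans e2
        have p23 := e2.trans e3
        have p13 := p12.trans e3
        intro i j
        fin_cases i <;> fin_cases j <;>
          simp only [pat3142, Matrix.cons_val_zero, Matrix.cons_val_one, Matrix.head_cons,
            Matrix.cons_val_two, Matrix.tail_cons, Matrix.cons_val_three] <;>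
          first
            | exact iff_of_true (by decide) e1
            | exact iff_of_true (by decide) e2
            | exact iff_of_true (by decide) e3
            | exact iff_of_true (by decide) p12
            | exact iff_of_true (by decide) p23
            | exact iff_of_true (by decide) p13
            | exact iff_of_false (by decide) (lt_irrefl _)
            | exact iff_of_false (by decide) (asymm e1)
            | exact iff_of_false (by decide) (asymm e2)
            | exact iff_of_false (by decide) (asymm e3)
            | exact iff_of_false (by decide) (asymm p12)
            | exact iff_of_false (by decide) (asymm p23)
            | exact iff_of_false (by decide) (asymm p13)
      · exact absurd (π.injective hay) (ne_of_lt (hab.trans hby))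
      · refine h3 ⟨![a, b, y, z], sm4 hab hby hyz, ?_⟩
        have e1 : π b < π z := hbz
        have e2 : π z < π y := hzy
        have e3 : π y < π a := hay
        have p12 := e1.trans e2
        have p23 := e2.trans e3
        have p13 := p12.trans e3
        intro i j
        fin_cases i <;> fin_cases j <;>
          simp only [pat4132, Matrix.cons_val_zero, Matrix.cons_val_one, Matrix.head_cons,
            Matrix.cons_val_two, Matrix.tail_cons, Matrix.cons_val_three] <;>
          first
            | exact iff_of_true (by decide) e1
            | exact iff_of_true (by decide) e2
            | exact iff_of_true (by decide) e3
            | exact iff_of_true (by decide) p12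
            | exact iff_of_true (by decide) p23
            | exact iff_of_true (by decide) p13
            | exact iff_of_false (by decide) (lt_irrefl _)
            | exact iff_of_false (by decide) (asymm e1)
            | exact iff_of_false (by decide) (asymm e2)
            | exact iff_of_false (by decide) (asymm e3)
            | exact iff_of_false (by decide) (asymm p12)
            | exact iff_of_false (by decide) (asymm p23)
            | exact iff_of_false (by decide) (asymm p13)
  · intro h
    refine ⟨?_, ?_, ?_⟩ <;> rintro ⟨f, hf, hp⟩ <;>
      apply h <;>
      refine ⟨f 1, f 2, f 3, hf (by decide), hf (by decide), ?_, ?_, ?_, ?_, ?_⟩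
    · exact (notLeading_iff π _).2 ⟨f 0, f 1, hf (by decide), le_refl _,
        (hp 1 0).1 (by decide)⟩
    · exact (notLeading_iff π _).2 ⟨f 0, f 1, hf (by decide),
        (hf (show (1 : Fin 4) < 2 by decide)).le, (hp 1 0).1 (by decide)⟩
    · exact (notLeading_iff π _).2 ⟨f 0, f 1, hf (by decide),
        (hf (show (1 : Fin 4) < 3 by decide)).le, (hp 1 0).1 (by decide)⟩
    · exact (hp 1 3).1 (by decide)
    · exact (hp 3 2).1 (by decide)
    · exact (notLeading_iff π _).2 ⟨f 0, f 1, hf (by decide), le_refl _,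
        (hp 1 0).1 (by decide)⟩
    · exact (notLeading_iff π _).2 ⟨f 0, f 1, hf (by decide),
        (hf (show (1 : Fin 4) < 2 by decide)).le, (hp 1 0).1 (by decide)⟩
    · exact (notLeading_iff π _).2 ⟨f 0, f 1, hf (by decide),
        (hf (show (1 : Fin 4) < 3 by decide)).le, (hp 1 0).1 (by decide)⟩
    · exact (hp 1 3).1 (by decide)
    · exact (hp 3 2).1 (by decide)
    · exact (notLeading_iff π _).2 ⟨f 0, f 1, hf (by decide), le_refl _,
        (hp 1 0).1 (by decide)⟩
    · exact (notLeading_iff π _).2 ⟨f 0, f 1, hf (by decide),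
        (hf (show (1 : Fin 4) < 2 by decide)).le, (hp 1 0).1 (by decide)⟩
    · exact (notLeading_iff π _).2 ⟨f 0, f 1, hf (by decide),
        (hf (show (1 : Fin 4) < 3 by decide)).le, (hp 1 0).1 (by decide)⟩
    · exact (hp 1 3).1 (by decide)
    · exact (hp 3 2).1 (by decide)
end

section
/- If a permutation π contains one of the patterns 2143, 3142, or 4132, then the permutation obtained from π by deleting all entries at leading-maximum positions contains the pattern 132. -/
theorem stmt4 {n : ℕ} (π : Equiv.Perm (Fin n))
    (h : Contains pat2143 π ∨ Contains pat3142 π ∨ Contains pat4132 π) :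
    ∃ x y z : Fin n, x < y ∧ y < z ∧
      ¬ IsLeadingMax π x ∧ ¬ IsLeadingMax π y ∧ ¬ IsLeadingMax π z ∧
      π x < π z ∧ π z < π y := by
  have key : ∀ (τ : Fin 4 → Fin 4), τ 1 < τ 0 → τ 1 < τ 3 → τ 3 < τ 2 →
      Contains τ π → ∃ x y z : Fin n, x < y ∧ y < z ∧
        ¬ IsLeadingMax π x ∧ ¬ IsLeadingMax π y ∧ ¬ IsLeadingMax π z ∧
        π x < π z ∧ π z < π y := by
    rintro τ h10 h13 h32 ⟨f, hf, hp⟩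
    have h01 : π (f 1) < π (f 0) := (hp 1 0).1 h10
    have hne : ∀ i : Fin n, f 1 ≤ i → ¬ IsLeadingMax π i := by
      intro i hi hL
      exact absurd (hL (f 1) hi (f 0) (hf (by decide))) (asymm h01)
    exact ⟨f 1, f 2, f 3, hf (by decide), hf (by decide),
      hne _ le_rfl, hne _ (le_of_lt (hf (by decide))), hne _ (le_of_lt (hf (by decide))),
      (hp 1 3).1 h13, (hp 3 2).1 h32⟩
  rcases h with h | h | h
  · exact key pat2143 (by decide) (by decide) (by decide) h
  · exact key pat3142 (by decide) (by decide) (by decide) h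
  · exact key pat4132 (by decide) (by decide) (by decide) h
end

section
/- Let π avoid 2143, 3142, and 4132, and suppose π contains an occurrence of 132 at positions x < y < z. Then x is a leading maximum of π, i.e., π(1) < π(2) < … < π(x). -/
/-!
Every position `q` that starts an occurrence `q < y < z` of 132 is a left-to-right maximum:
an earlier `p` with `π p > π q` would, according to where `π p` falls relative to `π z < π y`,
complete `p q y z` to an occurrence of 2143, 3142 or 4132. Applied to `x` this gives
`π j < π x < π z` for every `j < x`, so `j` also starts an occurrence of 132 with `y z`.
-/

lemma contains_of_lt_imp_lt {k n : ℕ} {τ : Fin k → Fin k} (hτ : Function.Injective τ)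
    {π : Equiv.Perm (Fin n)} {f : Fin k → Fin n} (hf : StrictMono f)
    (h : ∀ i j, τ i < τ j → π (f i) < π (f j)) : Contains τ π := by
  refine ⟨f, hf, fun i j => ⟨h i j, fun hπ => ?_⟩⟩
  by_contra hτij
  rcases (not_lt.1 hτij).lt_or_eq with hji | hji
  · exact (h j i hji).asymm hπ
  · exact hπ.ne (congrArg (π ∘ f) (hτ hji).symm)

lemma contains_of_four {n : ℕ} {τ : Fin 4 → Fin 4} (hτ : Function.Injective τ)
    {π : Equiv.Perm (Fin n)} {a b c d : Fin n} (hab : a < b) (hbc : b < c) (hcd : c < d)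
    (h : ∀ i j, τ i < τ j → π (![a, b, c, d] i) < π (![a, b, c, d] j)) : Contains τ π := by
  refine contains_of_lt_imp_lt hτ (Fin.strictMono_iff_lt_succ.2 fun i => ?_) h
  fin_cases i <;> assumption

theorem isLRMax_of_occ132 {n : ℕ} {π : Equiv.Perm (Fin n)}
    (h2143 : Avoids pat2143 π) (h3142 : Avoids pat3142 π) (h4132 : Avoids pat4132 π)
    {q y z : Fin n} (hqy : q < y) (hyz : y < z) (hqz : π q < π z) (hzy : π z < π y) :
    IsLRMax π q := by
  intro p hpq
  by_contra hnot
  have hqp : π q < π p := (not_lt.1 hnot).lt_of_ne (π.injective.ne hpq.ne')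
  have hpz : π p ≠ π z := π.injective.ne (hpq.trans (hqy.trans hyz)).ne
  have hpy : π p ≠ π y := π.injective.ne (hpq.trans hqy).ne
  rcases hpz.lt_or_gt with hpz | hzp
  · refine h2143 (contains_of_four (by decide) hpq hqy hyz fun i j => ?_)
    fin_cases i <;> fin_cases j <;> simp [pat2143] <;> order
  rcases hpy.lt_or_gt with hpy | hyp
  · refine h3142 (contains_of_four (by decide) hpq hqy hyz fun i j => ?_)
    fin_cases i <;> fin_cases j <;> simp [pat3142] <;> order
  · refine h4132 (contains_of_four (by decide) hpq hqy hyz fun i j => ?_)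
    fin_cases i <;> fin_cases j <;> simp [pat4132] <;> order

theorem stmt5 {n : ℕ} (π : Equiv.Perm (Fin n))
    (h2143 : Avoids pat2143 π) (h3142 : Avoids pat3142 π) (h4132 : Avoids pat4132 π)
    (x y z : Fin n) (hxy : x < y) (hyz : y < z)
    (hocc : π x < π z ∧ π z < π y) :
    IsLeadingMax π x := by
  have hx : IsLRMax π x := isLRMax_of_occ132 h2143 h3142 h4132 hxy hyz hocc.1 hocc.2
  intro j hjx
  rcases hjx.lt_or_eq with hjx | rfl
  · exact isLRMax_of_occ132 h2143 h3142 h4132 (hjx.trans hxy) hyz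
      ((hx j hjx).trans hocc.1) hocc.2
  · exact hx
end

section
/- Every simple permutation that avoids 2143, 3142, and 263514 also avoids 4132. Consequently, the set of simple permutations in Av(2143,3142,263514) equals the set of simple permutations in Av(2143,3142,4132). -/
/-- The set of values of `π` on the positions in `[i, j]` is an interval of values. -/
def IsIntervalAt {n : ℕ} (π : Equiv.Perm (Fin n)) (i j : Fin n) : Prop :=
  ∃ a b : Fin n, (fun x => π x) '' Set.Icc i j = Set.Icc a b

/-- A permutation is simple if its only intervals are the singletons and the whole thing. -/
def IsSimple {n : ℕ} (π : Equiv.Perm (Fin n)) : Prop :=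
  ∀ i j : Fin n, i ≤ j → IsIntervalAt π i j → i = j ∨ ((i : ℕ) = 0 ∧ (j : ℕ) = n - 1)

section Aux

variable {n : ℕ} (σ : Equiv.Perm (Fin n))

lemma contains2143_of (a b c d : Fin n)
    (hab : a < b) (hbc : b < c) (hcd : c < d)
    (h1 : σ b < σ a) (h2 : σ a < σ d) (h3 : σ d < σ c) :
    Contains pat2143 σ := by
  refine ⟨![a, b, c, d], ?_, ?_⟩
  · intro i j hij
    simp only [Fin.lt_def] at hab hbc hcd ⊢
    fin_cases i <;> fin_cases j <;> simp_all <;> omega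
  · intro i j
    simp only [Fin.lt_def] at h1 h2 h3 ⊢
    fin_cases i <;> fin_cases j <;> simp_all [pat2143] <;> omega

lemma contains3142_of (a b c d : Fin n)
    (hab : a < b) (hbc : b < c) (hcd : c < d)
    (h1 : σ b < σ d) (h2 : σ d < σ a) (h3 : σ a < σ c) :
    Contains pat3142 σ := by
  refine ⟨![a, b, c, d], ?_, ?_⟩
  · intro i j hij
    simp only [Fin.lt_def] at hab hbc hcd ⊢
    fin_cases i <;> fin_cases j <;> simp_all <;> omega
  · intro i j
    simp only [Fin.lt_def] at h1 h2 h3 ⊢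
    fin_cases i <;> fin_cases j <;> simp_all [pat3142] <;> omega

lemma contains263514_of (e a b c m d : Fin n)
    (hea : e < a) (hab : a < b) (hbc : b < c) (hcm : c < m) (hmd : m < d)
    (h1 : σ m < σ e) (h2 : σ e < σ b) (h3 : σ b < σ d) (h4 : σ d < σ c)
    (h5 : σ c < σ a) :
    Contains pat263514 σ := by
  have p1 := hea.trans hab; have p2 := hab.trans hbc; have p3 := hbc.trans hcm
  have p4 := hcm.trans hmd; have p5 := p1.trans hbc; have p6 := p2.trans hcm
  have p7 := p3.trans hmd; have p8 := p5.trans hcm; have p9 := p6.trans hmd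
  have p10 := p8.trans hmd
  have v1 := h1.trans h2; have v2 := h2.trans h3; have v3 := h3.trans h4
  have v4 := h4.trans h5; have v5 := v1.trans h3; have v6 := v2.trans h4
  have v7 := v3.trans h5; have v8 := v5.trans h4; have v9 := v6.trans h5
  have v10 := v8.trans h5
  have e5 : (![e, a, b, c, m, d]) (5 : Fin 6) = d := rfl
  have q5 : pat263514 (5 : Fin 6) = 3 := rfl
  refine ⟨![e, a, b, c, m, d], ?_, ?_⟩
  · intro i j hij
    fin_cases i <;> fin_cases j <;> simp_all [e5]
  · intro i j
    fin_cases i <;> fin_cases j <;> simp_all [pat263514, e5, q5] <;>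
      first | rfl | exact le_of_lt (by assumption)

/-- the combined forbidden configuration from avoiding 2143 and 3142 -/
lemma starCfg (h2143 : Avoids pat2143 σ) (h3142 : Avoids pat3142 σ)
    {i j k l : Fin n} (hij : i < j) (hjk : j < k) (hkl : k < l)
    (a1 : σ j < σ i) (a2 : σ i < σ k) (a3 : σ j < σ l) (a4 : σ l < σ k) :
    False := by
  rcases lt_trichotomy (σ i) (σ l) with h | h | h
  · exact h2143 (contains2143_of σ i j k l hij hjk hkl a1 h a4)
  · exact absurd (σ.injective h) (ne_of_lt (hij.trans (hjk.trans hkl)))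
  · exact h3142 (contains3142_of σ i j k l hij hjk hkl a3 h a2)

lemma c4_of_c6 (h : Contains pat263514 σ) : Contains pat4132 σ := by
  obtain ⟨f, hf, hiff⟩ := h
  have hg : ∀ i j : Fin 4, i < j →
      (![1, 2, 3, 5] : Fin 4 → Fin 6) i < ![1, 2, 3, 5] j := by decide
  have hpat : ∀ i j : Fin 4, pat4132 i < pat4132 j ↔
      pat263514 (![1, 2, 3, 5] i) < pat263514 (![1, 2, 3, 5] j) := by decide
  refine ⟨fun i => f (![1, 2, 3, 5] i), fun i j hij => hf (hg i j hij), fun i j => ?_⟩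
  rw [hpat i j]
  exact hiff _ _

/-- The main combinatorial lemma. -/
lemma key (hs : IsSimple σ) (h2143 : Avoids pat2143 σ) (h3142 : Avoids pat3142 σ)
    (h4 : Contains pat4132 σ) : Contains pat263514 σ := by
  classical
  set Occ : Fin n → Fin n → Fin n → Fin n → Prop := fun a b c d =>
    a < b ∧ b < c ∧ c < d ∧ σ b < σ d ∧ σ d < σ c ∧ σ c < σ a with hOccDef
  -- extract an occurrence
  have hex : ∃ a b c d, Occ a b c d := by
    obtain ⟨f, hf, hiff⟩ := h4
    exact ⟨f 0, f 1, f 2, f 3, hf (by decide), hf (by decide), hf (by decide),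
      (hiff 1 3).1 (by decide), (hiff 3 2).1 (by decide), (hiff 2 0).1 (by decide)⟩
  -- minimize the value at the second position
  have hP1 : ∃ v : ℕ, ∃ a b c d, Occ a b c d ∧ (σ b : ℕ) = v := by
    obtain ⟨a, b, c, d, h⟩ := hex; exact ⟨_, a, b, c, d, h, rfl⟩
  obtain ⟨a1, b1, c1, d1, hO1, hx1⟩ := Nat.find_spec hP1
  -- then maximize the last position
  have hP2 : ∃ k : ℕ, ∃ a b c d, Occ a b c d ∧ (σ b : ℕ) = Nat.find hP1 ∧
      n - 1 - (d : ℕ) = k := ⟨_, a1, b1, c1, d1, hO1, hx1, rfl⟩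
  obtain ⟨a, b, c, d, hO, hxv, hdv⟩ := Nat.find_spec hP2
  obtain ⟨hab, hbc, hcd, h1, h2, h3⟩ := hO
  have hxmin : ∀ a' b' c' d', Occ a' b' c' d' → (σ b : ℕ) ≤ (σ b' : ℕ) := by
    intro a' b' c' d' hO'
    by_contra hcon
    push_neg at hcon
    exact Nat.find_min hP1 (hxv ▸ hcon) ⟨a', b', c', d', hO', rfl⟩
  have hdmax : ∀ a' c' d', Occ a' b c' d' → (d' : ℕ) ≤ (d : ℕ) := by
    intro a' c' d' hO'
    by_contra hcon
    push_neg at hcon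
    have hfind : n - 1 - (d' : ℕ) < Nat.find hP2 := by
      rw [← hdv]; have := d.isLt; have := d'.isLt; omega
    exact Nat.find_min hP2 hfind ⟨a', b, c', d', hO', hxv, rfl⟩
  -- basic value chain : σ b < σ d < σ c < σ a
  have hba : σ b < σ a := h1.trans (h2.trans h3)
  have hbc' : σ b < σ c := h1.trans h2
  have hda : σ d < σ a := h2.trans h3
  -- F2 : nothing between a and c has value below σ b
  have F2 : ∀ p : Fin n, a < p → p < c → σ p < σ b → False := by
    intro p hp1 hp2 hplt
    have hocc : Occ a p c d := ⟨hp1, hp2, hcd, hplt.trans h1, h2, h3⟩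
    have := hxmin a p c d hocc
    exact absurd hplt (by simp only [Fin.lt_def]; omega)
  -- Fw : everything strictly between b and d has value below σ a
  have Fw : ∀ p : Fin n, b < p → p < d → σ p < σ a := by
    intro p hp1 hp2
    by_contra hcon
    push_neg at hcon
    have hne : σ a ≠ σ p := by
      intro h; exact absurd (σ.injective h ▸ (hab.trans hp1)) (lt_irrefl _)
    have hap : σ a < σ p := lt_of_le_of_ne hcon hne
    exact starCfg σ h2143 h3142 hab hp1 hp2 hba hap h1 (h2.trans (h3.trans hap))
  -- the interval [b, d] of positions
  set F : Finset (Fin n) := (Finset.Icc b d).image σ with hFdef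
  have hbd : b ≤ d := (hbc.trans hcd).le
  have hbF : σ b ∈ F := Finset.mem_image.2 ⟨b, Finset.mem_Icc.2 ⟨le_refl _, hbd⟩, rfl⟩
  have hcF : σ c ∈ F := Finset.mem_image.2 ⟨c, Finset.mem_Icc.2 ⟨hbc.le, hcd.le⟩, rfl⟩
  have hdF : σ d ∈ F := Finset.mem_image.2 ⟨d, Finset.mem_Icc.2 ⟨hbd, le_refl _⟩, rfl⟩
  have hne : F.Nonempty := ⟨_, hbF⟩
  obtain ⟨pLo, hpLoMem, hpLoEq⟩ := Finset.mem_image.1 (F.min'_mem hne)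
  obtain ⟨pM, hpMMem, hpMEq⟩ := Finset.mem_image.1 (F.max'_mem hne)
  rw [Finset.mem_Icc] at hpLoMem hpMMem
  -- position of max is strictly inside
  have hMc : σ c ≤ σ pM := hpMEq ▸ F.le_max' _ hcF
  have hbpM : b < pM := by
    rcases eq_or_lt_of_le hpMMem.1 with h | h
    · exact absurd (h.symm ▸ hMc) (not_le.2 hbc')
    · exact h
  have hpMd : pM < d := by
    rcases eq_or_lt_of_le hpMMem.2 with h | h
    · exact absurd (h ▸ hMc) (not_le.2 h2)
    · exact h
  have hMa : σ pM < σ a := Fw pM hbpM hpMd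
  -- the splitter
  have hsplit : ∃ v : Fin n, F.min' hne < v ∧ v < F.max' hne ∧ v ∉ F := by
    by_contra hcon
    push_neg at hcon
    have hFeq : F = Finset.Icc (F.min' hne) (F.max' hne) := by
      apply Finset.ext
      intro v
      simp only [Finset.mem_Icc]
      constructor
      · intro hv; exact ⟨F.min'_le v hv, F.le_max' v hv⟩
      · rintro ⟨hlv, hvm⟩
        rcases eq_or_lt_of_le hlv with h | h
        · exact h ▸ F.min'_mem hne
        rcases eq_or_lt_of_le hvm with h' | h'
        · exact h' ▸ F.max'_mem hne
        exact hcon v h h'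
    have hInt : IsIntervalAt σ b d := by
      refine ⟨F.min' hne, F.max' hne, Set.ext fun u => ?_⟩
      simp only [Set.mem_image, Set.mem_Icc]
      constructor
      · rintro ⟨p, ⟨hp1, hp2⟩, rfl⟩
        have hm : σ p ∈ F := Finset.mem_image.2 ⟨p, Finset.mem_Icc.2 ⟨hp1, hp2⟩, rfl⟩
        exact ⟨F.min'_le _ hm, F.le_max' _ hm⟩
      · rintro ⟨h1', h2'⟩
        have hm : u ∈ F := by rw [hFeq]; exact Finset.mem_Icc.2 ⟨h1', h2'⟩
        obtain ⟨p, hp, hpe⟩ := Finset.mem_image.1 hm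
        exact ⟨p, Finset.mem_Icc.1 hp, hpe⟩
    rcases hs b d hbd hInt with h | ⟨h0, _⟩
    · exact absurd (h ▸ (hbc.trans hcd)) (lt_irrefl _)
    · have : (a : ℕ) < (b : ℕ) := hab
      omega
  obtain ⟨v, hlov, hvM, hvF⟩ := hsplit
  set e : Fin n := σ.symm v with heDef
  have heq : σ e = v := σ.apply_symm_apply v
  have heIcc : e ∉ Finset.Icc b d := fun h => hvF (Finset.mem_image.2 ⟨e, h, heq⟩)
  rw [Finset.mem_Icc] at heIcc
  push_neg at heIcc
  have hcase : e < b ∨ d < e := by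
    rcases lt_or_ge e b with h | h
    · exact Or.inl h
    · exact Or.inr (heIcc h)
  rw [← hpLoEq] at hlov
  rw [← hpMEq] at hvM
  have hdM : σ d < σ pM := h2.trans_le hMc
  rcases lt_trichotomy v (σ b) with hvx | hvx | hvx
  · -- v < σ b : the splitter is a candidate for "e"
    have hLow : σ pLo < σ b := hlov.trans hvx
    have hapLo : a < pLo := hab.trans_le hpLoMem.1
    have hcpLo : c < pLo := by
      rcases lt_trichotomy pLo c with h | h | h
      · exact (F2 pLo hapLo h hLow).elim
      · exact absurd (h ▸ hLow) (not_lt.2 hbc'.le)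
      · exact h
    have hpLod : pLo < d := by
      rcases eq_or_lt_of_le hpLoMem.2 with h | h
      · exact absurd (h ▸ hLow) (not_lt.2 h1.le)
      · exact h
    rcases hcase with hce | hce
    · -- e < b ; compare with a
      rcases lt_trichotomy e a with hea | hea | hea
      · -- found the 263514 pattern!
        exact contains263514_of σ e a b c pLo d hea hab hbc hcpLo hpLod
          (heq.symm ▸ hlov) (heq.symm ▸ hvx) h1 h2 h3
      · rw [hea] at heq
        exact absurd ((heq.symm ▸ hvx).trans hba) (lt_irrefl _)
      · exact (F2 e hea (hce.trans hbc) (heq.symm ▸ hvx)).elim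
    · -- d < e : star on (b, pLo, d, e)
      exact (starCfg σ h2143 h3142 (hbc.trans hcpLo) hpLod hce
        hLow h1 (heq.symm ▸ hlov) (heq.symm ▸ (hvx.trans h1))).elim
  · exact absurd (hvx ▸ hbF) hvF
  · -- σ b < v
    rcases hcase with hce | hce
    · -- e < b : star on (e, b, pM, d)
      exact (starCfg σ h2143 h3142 hce hbpM hpMd
        (heq.symm ▸ hvx) (heq.symm ▸ hvM) h1 hdM).elim
    · -- d < e : a new occurrence (a, b, pM, e) beats maximality of d
      have hocc : Occ a b pM e :=
        ⟨hab, hbpM, hpMd.trans hce, heq.symm ▸ hvx, heq.symm ▸ hvM, hMa⟩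
      have hle := hdmax a pM e hocc
      have hlt : (d : ℕ) < (e : ℕ) := hce
      omega

end Aux


theorem stmt6 {n : ℕ} (σ : Equiv.Perm (Fin n)) :
    (IsSimple σ → Avoids pat2143 σ → Avoids pat3142 σ → Avoids pat263514 σ →
      Avoids pat4132 σ) ∧
    ((IsSimple σ ∧ Avoids pat2143 σ ∧ Avoids pat3142 σ ∧ Avoids pat263514 σ) ↔
      (IsSimple σ ∧ Avoids pat2143 σ ∧ Avoids pat3142 σ ∧ Avoids pat4132 σ)) := by
  have main : IsSimple σ → Avoids pat2143 σ → Avoids pat3142 σ → Avoids pat263514 σ →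
      Avoids pat4132 σ := fun hs h1 h2 h6 hc => h6 (key σ hs h1 h2 hc)
  refine ⟨main, ?_, ?_⟩
  · rintro ⟨hs, h1, h2, h6⟩
    exact ⟨hs, h1, h2, main hs h1 h2 h6⟩
  · rintro ⟨hs, h1, h2, h4⟩
    exact ⟨hs, h1, h2, fun hc6 => h4 (c4_of_c6 σ hc6)⟩
end

section
/- Every 132-avoiding permutation of length at least 2 contains at least one bond, i.e., there is an index i with |π(i+1) − π(i)| = 1. -/
lemma contains132 {n : ℕ} (π : Equiv.Perm (Fin n)) (a b c : Fin n) (hab : a < b) (hbc : b < c)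
    (h1 : π a < π c) (h2 : π c < π b) : Contains pat132 π := by
  have hac : a < c := hab.trans hbc
  have h3 : π a < π b := h1.trans h2
  refine ⟨![a, b, c], ?_, ?_⟩
  · intro i j hij
    fin_cases i <;> fin_cases j <;>
      simp only [Matrix.cons_val_zero, Matrix.cons_val_one, Matrix.head_cons, Fin.mk_lt_mk,
        Matrix.cons_val_two, Matrix.tail_cons, Fin.isValue] at hij ⊢ <;>
      first | exact hab | exact hbc | exact hac | omega
  · intro i j
    have e0 : pat132 0 = 0 := rfl
    have e1 : pat132 1 = 2 := rfl
    have e2 : pat132 2 = 1 := rfl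
    fin_cases i <;> fin_cases j <;>
      simp only [Matrix.cons_val_zero, Matrix.cons_val_one, Matrix.head_cons, Fin.isValue,
        Matrix.cons_val_two, Matrix.tail_cons, e0, e1, e2] <;>
      constructor <;> intro h <;>
      first
        | exact h1 | exact h2 | exact h3 | exact absurd h (by decide)
        | exact absurd h (lt_asymm h1) | exact absurd h (lt_asymm h2)
        | exact absurd h (lt_asymm h3) | exact absurd h (lt_irrefl _) | decide

/-- Key window lemma: if the positions `[a, a+m)` of a 132-avoiding permutation carry
exactly the values `[s, s+m)`, and `m ≥ 2`, then there is a bond. -/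
lemma windowkey : ∀ m : ℕ, 2 ≤ m → ∀ (n a s : ℕ) (π : Equiv.Perm (Fin n)),
    Avoids pat132 π → a + m ≤ n →
    (∀ (i : ℕ) (h : i < n), a ≤ i → i < a + m →
      s ≤ (π ⟨i, h⟩ : ℕ) ∧ (π ⟨i, h⟩ : ℕ) < s + m) →
    ∃ (i : ℕ) (hi : i + 1 < n),
      (π ⟨i + 1, hi⟩ : ℕ) = (π ⟨i, Nat.lt_of_succ_lt hi⟩ : ℕ) + 1 ∨
      (π ⟨i, Nat.lt_of_succ_lt hi⟩ : ℕ) = (π ⟨i + 1, hi⟩ : ℕ) + 1 := by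
  intro m
  induction m using Nat.strong_induction_on with
  | _ m ih =>
    intro hm2 n a s π havoid ham hwin
    classical
    set F : ℕ → ℕ := fun i => if h : i < n then (π ⟨i, h⟩ : ℕ) else 0 with hF
    have FF : ∀ (i : ℕ) (h : i < n), F i = (π ⟨i, h⟩ : ℕ) := fun i h => dif_pos h
    have Finj : ∀ x y, x < n → y < n → F x = F y → x = y := by
      intro x y hx hy hxy
      rw [FF x hx, FF y hy] at hxy
      have := π.injective (Fin.ext hxy)
      rw [Fin.ext_iff] at this
      exact this
    have hwin' : ∀ i : ℕ, a ≤ i → i < a + m → s ≤ F i ∧ F i < s + m := by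
      intro i h1 h2
      have hn : i < n := by omega
      rw [FF i hn]
      exact hwin i hn h1 h2
    -- the window is mapped bijectively onto [s, s+m); find position of the max value
    have hmax : ∃ p : ℕ, a ≤ p ∧ p < a + m ∧ F p = s + m - 1 := by
      by_contra hcon
      push_neg at hcon
      have hsub : (Finset.Ico a (a + m)).image F ⊆ Finset.Ico s (s + m - 1) := by
        intro v hv
        simp only [Finset.mem_image, Finset.mem_Ico] at hv ⊢
        obtain ⟨i, ⟨hi1, hi2⟩, rfl⟩ := hv
        have h := hwin' i hi1 hi2
        have hne := hcon i hi1 hi2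
        omega
      have hcard := Finset.card_le_card hsub
      rw [Finset.card_image_of_injOn, Nat.card_Ico, Nat.card_Ico] at hcard
      · omega
      · intro x hx y hy hxy
        simp only [Finset.coe_Ico, Set.mem_Ico] at hx hy
        exact Finj x y (by omega) (by omega) hxy
    obtain ⟨p, hap, hpam, hFp⟩ := hmax
    -- the crossing property
    have cross : ∀ x y : ℕ, a ≤ x → x < p → p < y → y < a + m → F y < F x := by
      intro x y hax hxp hpy hyam
      by_contra hcc
      push_neg at hcc
      have hxn : x < n := by omega
      have hyn : y < n := by omega
      have hpn : p < n := by omega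
      have hne : F x ≠ F y := by
        intro h
        have := Finj x y hxn hyn h
        omega
      have h1 : F x < F y := by omega
      have h2 : F y < F p := by
        have hy := hwin' y (by omega) hyam
        have hne2 : F y ≠ F p := fun h => by
          have := Finj y p hyn hpn h; omega
        omega
      apply havoid
      refine contains132 π ⟨x, hxn⟩ ⟨p, hpn⟩ ⟨y, hyn⟩ ?_ ?_ ?_ ?_
      · rw [Fin.lt_def]; exact hxp
      · rw [Fin.lt_def]; exact hpy
      · rw [Fin.lt_def]
        rw [FF x hxn, FF y hyn] at h1; exact h1
      · rw [Fin.lt_def]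
        rw [FF y hyn, FF p hpn] at h2; exact h2
    -- lower bound for values left of the max
    have lower : ∀ x : ℕ, a ≤ x → x < p → s + (a + m - 1 - p) ≤ F x := by
      intro x hax hxp
      have hsub : (Finset.Ico (p + 1) (a + m)).image F ⊆ Finset.Ico s (F x) := by
        intro v hv
        simp only [Finset.mem_image, Finset.mem_Ico] at hv ⊢
        obtain ⟨y, ⟨hy1, hy2⟩, rfl⟩ := hv
        have h := hwin' y (by omega) hy2
        have := cross x y hax hxp (by omega) hy2
        omega
      have hcard := Finset.card_le_card hsub
      rw [Finset.card_image_of_injOn, Nat.card_Ico, Nat.card_Ico] at hcard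
      · have hx0 := hwin' x (by omega) (by omega)
        omega
      · intro u hu v hv huv
        simp only [Finset.coe_Ico, Set.mem_Ico] at hu hv
        exact Finj u v (by omega) (by omega) huv
    -- upper bound (strict below max) for non-max positions in window
    have upper : ∀ x : ℕ, a ≤ x → x < a + m → x ≠ p → F x < s + m - 1 := by
      intro x hax hxam hxp
      have h := hwin' x hax hxam
      have hne : F x ≠ F p := fun h => by
        have := Finj x p (by omega) (by omega) h; omega
      omega
    -- case split on position of max within window
    rcases Nat.lt_or_ge (p - a) 2 with hk | hk
    · rcases Nat.lt_or_ge (p - a) 1 with hk0 | hk1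
      · -- p = a : max at left end of window
        have hpa : p = a := by omega
        rcases Nat.lt_or_ge m 3 with hm3 | hm3
        · -- m = 2 : window is (s+1, s); bond
          have hm2' : m = 2 := by omega
          have h1n : a + 1 < n := by omega
          have hv1 : F (a + 1) = s := by
            have h := hwin' (a + 1) (by omega) (by omega)
            have := upper (a + 1) (by omega) (by omega) (by omega)
            omega
          refine ⟨a, h1n, ?_⟩
          have e1 := FF (a + 1) h1n
          have e2 := FF a (Nat.lt_of_succ_lt h1n)
          rw [hpa] at hFp
          right
          omega
        · -- m ≥ 3 : recurse on window (a+1, m-1, s)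
          have := ih (m - 1) (by omega) (by omega) n (a + 1) s π havoid (by omega) ?_
          · exact this
          · intro i h h1 h2
            have hw := hwin i h (by omega) (by omega)
            have := upper i (by omega) (by omega) (by omega)
            rw [FF i h] at this
            omega
      · -- p = a + 1 : bond at a
        have hpa : p = a + 1 := by omega
        have h1n : a + 1 < n := by omega
        have hva : F a = s + m - 2 := by
          have h := hwin' a (by omega) (by omega)
          have hl := lower a (by omega) (by omega)
          have hu := upper a (by omega) (by omega) (by omega)
          omega
        refine ⟨a, h1n, ?_⟩
        have e1 := FF (a + 1) h1n
        have e2 := FF a (Nat.lt_of_succ_lt h1n)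
        rw [hpa] at hFp
        left
        omega
    · -- p ≥ a + 2 : recurse on window (a, p - a, s + m - 1 - (p - a))
      have := ih (p - a) (by omega) hk n a (s + m - 1 - (p - a)) π havoid (by omega) ?_
      · exact this
      · intro i h h1 h2
        have hw := hwin i h (by omega) (by omega)
        have hl := lower i (by omega) (by omega)
        have hu := upper i (by omega) (by omega) (by omega)
        rw [FF i h] at hl hu
        omega

theorem stmt7 {n : ℕ} (π : Equiv.Perm (Fin n)) (h132 : Avoids pat132 π) (hn : 2 ≤ n) :
    ∃ (i : ℕ) (hi : i + 1 < n),
      (π ⟨i + 1, hi⟩ : ℕ) = (π ⟨i, Nat.lt_of_succ_lt hi⟩ : ℕ) + 1 ∨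
      (π ⟨i, Nat.lt_of_succ_lt hi⟩ : ℕ) = (π ⟨i + 1, hi⟩ : ℕ) + 1 := by
  refine windowkey n hn n 0 0 π h132 (by omega) ?_
  intro i h _ _
  have := (π ⟨i, h⟩).isLt
  omega
end

section
/- Let σ be a simple permutation of length n ≥ 4 avoiding 2143, 3142, and 4132, and let ℓ = ℓ(σ) be the number of leading maxima. Then σ(ℓ) = n and σ(n) = n − 1. -/
set_option linter.unusedTactic false
set_option linter.unreachableTactic false

lemma mk_strictMono {α : Type*} [Preorder α] {p0 p1 p2 p3 : α}
    (h01 : p0 < p1) (h12 : p1 < p2) (h23 : p2 < p3) :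
    StrictMono ![p0, p1, p2, p3] := by
  have h02 := h01.trans h12
  have h13 := h12.trans h23
  have h03 := h02.trans h23
  intro i j hij
  fin_cases i <;> fin_cases j <;>
    simp only [Fin.mk_zero, Fin.mk_one, show (⟨2,by omega⟩ : Fin 4) = 2 from rfl,
      show (⟨3,by omega⟩ : Fin 4) = 3 from rfl,
      Matrix.cons_val_zero, Matrix.cons_val_one, Matrix.head_cons,
      Matrix.cons_val_two, Matrix.cons_val_three, Matrix.tail_cons] <;>
    first
      | exact h01 | exact h12 | exact h23 | exact h02 | exact h13 | exact h03
      | exact absurd hij (by decide)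

section patContains
variable {n : ℕ} (σ : Equiv.Perm (Fin n)) {p0 p1 p2 p3 : Fin n}

lemma contains3142 (h01 : p0 < p1) (h12 : p1 < p2) (h23 : p2 < p3)
    (v1 : σ p1 < σ p3) (v2 : σ p3 < σ p0) (v3 : σ p0 < σ p2) : Contains pat3142 σ := by
  refine ⟨![p0, p1, p2, p3], mk_strictMono h01 h12 h23, ?_⟩
  have w1 : σ p1 < σ p0 := v1.trans v2
  have w2 : σ p1 < σ p2 := w1.trans v3
  have w3 : σ p3 < σ p2 := v2.trans v3
  intro i j
  fin_cases i <;> fin_cases j <;>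
    simp only [pat3142, Fin.mk_zero, Fin.mk_one, show (⟨2,by omega⟩ : Fin 4) = 2 from rfl,
      show (⟨3,by omega⟩ : Fin 4) = 3 from rfl,
      Matrix.cons_val_zero, Matrix.cons_val_one, Matrix.head_cons,
      Matrix.cons_val_two, Matrix.cons_val_three, Matrix.tail_cons] <;>
    constructor <;> intro h <;>
      first
        | exact v1 | exact v2 | exact v3 | exact w1 | exact w2 | exact w3
        | exact absurd h (lt_irrefl _)
        | exact absurd h (by decide)
        | exact absurd h (not_lt.mpr (le_of_lt (by first | exact v1 | exact v2 | exact v3 | exact w1 | exact w2 | exact w3)))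
        | decide

lemma contains2143 (h01 : p0 < p1) (h12 : p1 < p2) (h23 : p2 < p3)
    (v1 : σ p1 < σ p0) (v2 : σ p0 < σ p3) (v3 : σ p3 < σ p2) : Contains pat2143 σ := by
  refine ⟨![p0, p1, p2, p3], mk_strictMono h01 h12 h23, ?_⟩
  have w1 : σ p1 < σ p3 := v1.trans v2
  have w2 : σ p1 < σ p2 := w1.trans v3
  have w3 : σ p0 < σ p2 := v2.trans v3
  intro i j
  fin_cases i <;> fin_cases j <;>
    simp only [pat2143, Fin.mk_zero, Fin.mk_one, show (⟨2,by omega⟩ : Fin 4) = 2 from rfl,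
      show (⟨3,by omega⟩ : Fin 4) = 3 from rfl,
      Matrix.cons_val_zero, Matrix.cons_val_one, Matrix.head_cons,
      Matrix.cons_val_two, Matrix.cons_val_three, Matrix.tail_cons] <;>
    constructor <;> intro h <;>
      first
        | exact v1 | exact v2 | exact v3 | exact w1 | exact w2 | exact w3
        | exact absurd h (lt_irrefl _)
        | exact absurd h (by decide)
        | exact absurd h (not_lt.mpr (le_of_lt (by first | exact v1 | exact v2 | exact v3 | exact w1 | exact w2 | exact w3)))
        | decide

lemma contains4132 (h01 : p0 < p1) (h12 : p1 < p2) (h23 : p2 < p3)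
    (v1 : σ p1 < σ p3) (v2 : σ p3 < σ p2) (v3 : σ p2 < σ p0) : Contains pat4132 σ := by
  refine ⟨![p0, p1, p2, p3], mk_strictMono h01 h12 h23, ?_⟩
  have w1 : σ p1 < σ p2 := v1.trans v2
  have w2 : σ p1 < σ p0 := w1.trans v3
  have w3 : σ p3 < σ p0 := v2.trans v3
  intro i j
  fin_cases i <;> fin_cases j <;>
    simp only [pat4132, Fin.mk_zero, Fin.mk_one, show (⟨2,by omega⟩ : Fin 4) = 2 from rfl,
      show (⟨3,by omega⟩ : Fin 4) = 3 from rfl,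
      Matrix.cons_val_zero, Matrix.cons_val_one, Matrix.head_cons,
      Matrix.cons_val_two, Matrix.cons_val_three, Matrix.tail_cons] <;>
    constructor <;> intro h <;>
      first
        | exact v1 | exact v2 | exact v3 | exact w1 | exact w2 | exact w3
        | exact absurd h (lt_irrefl _)
        | exact absurd h (by decide)
        | exact absurd h (not_lt.mpr (le_of_lt (by first | exact v1 | exact v2 | exact v3 | exact w1 | exact w2 | exact w3)))
        | decide

end patContains

lemma topBlock {n : ℕ} (σ : Equiv.Perm (Fin n)) {s m : Fin n} (hsm : s ≤ m)
    (H : ∀ x y : Fin n, x ∈ Set.Icc s m → y ∉ Set.Icc s m → σ y < σ x) :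
    IsIntervalAt σ s m := by
  obtain ⟨lo, hloT, hlomin⟩ := Set.exists_min_image (σ '' Set.Icc s m) id
    (Set.toFinite _) ⟨σ s, ⟨s, ⟨le_refl s, hsm⟩, rfl⟩⟩
  have hn0 : 0 < n := s.pos
  refine ⟨lo, ⟨n - 1, by omega⟩, ?_⟩
  ext w
  constructor
  · rintro ⟨x, hx, rfl⟩
    refine ⟨hlomin _ ⟨x, hx, rfl⟩, ?_⟩
    simp only [Fin.le_def, Fin.val_mk]
    have := (σ x).isLt
    omega
  · rintro ⟨hlw, _⟩
    by_contra hw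
    have hy : σ.symm w ∉ Set.Icc s m := fun h => hw ⟨_, h, by simp⟩
    obtain ⟨x0, hx0, hx0e⟩ := hloT
    have h2 := H x0 (σ.symm w) hx0 hy
    rw [hx0e, Equiv.apply_symm_apply] at h2
    exact absurd hlw (not_le.mpr h2)

lemma bottomBlock {n : ℕ} (σ : Equiv.Perm (Fin n)) {s m : Fin n} (hsm : s ≤ m)
    (H : ∀ x y : Fin n, x ∈ Set.Icc s m → y ∉ Set.Icc s m → σ x < σ y) :
    IsIntervalAt σ s m := by
  obtain ⟨hi, hhiT, hhimax⟩ := Set.exists_max_image (σ '' Set.Icc s m) id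
    (Set.toFinite _) ⟨σ s, ⟨s, ⟨le_refl s, hsm⟩, rfl⟩⟩
  have hn0 : 0 < n := s.pos
  refine ⟨⟨0, hn0⟩, hi, ?_⟩
  ext w
  constructor
  · rintro ⟨x, hx, rfl⟩
    exact ⟨by simp only [Fin.le_def, Fin.val_mk]; omega, hhimax _ ⟨x, hx, rfl⟩⟩
  · rintro ⟨_, hwh⟩
    by_contra hw
    have hy : σ.symm w ∉ Set.Icc s m := fun h => hw ⟨_, h, by simp⟩
    obtain ⟨x0, hx0, hx0e⟩ := hhiT
    have h2 := H x0 (σ.symm w) hx0 hy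
    rw [hx0e, Equiv.apply_symm_apply] at h2
    exact absurd hwh (not_le.mpr h2)

theorem stmt9 {n : ℕ} (σ : Equiv.Perm (Fin n)) (hs : IsSimple σ) (hn : 4 ≤ n)
    (h2143 : Avoids pat2143 σ) (h3142 : Avoids pat3142 σ) (h4132 : Avoids pat4132 σ) :
    (∀ lm : Fin n, (lm : ℕ) + 1 = numLeading σ → (σ lm : ℕ) = n - 1) ∧
    (∀ last : Fin n, (last : ℕ) = n - 1 → (σ last : ℕ) = n - 2) := by
  have hn0 : 0 < n := by omega
  have hS0 : IsLeadingMax σ ⟨0, hn0⟩ := by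
    intro j hj k hk
    exfalso
    simp only [Fin.le_def, Fin.val_mk] at hj
    simp only [Fin.lt_def] at hk
    omega
  obtain ⟨mx, hmxS, hmax⟩ := Set.exists_max_image {i : Fin n | IsLeadingMax σ i} id
    (Set.toFinite _) ⟨⟨0, hn0⟩, hS0⟩
  have hmxS' : IsLeadingMax σ mx := hmxS
  have hmax' : ∀ i : Fin n, IsLeadingMax σ i → i ≤ mx := fun i hi => hmax i hi
  have hmono : ∀ i j : Fin n, j < i → i ≤ mx → σ j < σ i := fun i j hji hi => hmxS' i hi j hji
  have hmono' : ∀ i j : Fin n, j ≤ i → i ≤ mx → σ j ≤ σ i := by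
    intro i j hji hi
    rcases eq_or_lt_of_le hji with h | h
    · rw [h]
    · exact (hmono i j h hi).le
  -- mx < n - 1
  have hmxlt : (mx : ℕ) < n - 1 := by
    by_contra hcon
    have hmxval : (mx : ℕ) = n - 1 := by have := mx.isLt; omega
    have hall : ∀ i : Fin n, i ≤ mx := by
      intro i; simp only [Fin.le_def]; have := i.isLt; omega
    have hint : IsIntervalAt σ ⟨0, hn0⟩ ⟨n - 2, by omega⟩ := by
      apply bottomBlock σ (by simp only [Fin.le_def, Fin.val_mk]; omega)
      intro x y hx hy
      rw [Set.mem_Icc] at hx hy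
      have hx2 := hx.2
      simp only [Fin.le_def, Fin.val_mk] at hx2
      have hyv : ¬ ((y : ℕ) ≤ n - 2) := by
        intro hc
        exact hy ⟨by simp only [Fin.le_def, Fin.val_mk]; omega,
          by simp only [Fin.le_def, Fin.val_mk]; omega⟩
      have hxy : x < y := by simp only [Fin.lt_def]; omega
      exact hmono y x hxy (hall y)
    rcases hs _ _ (by simp only [Fin.le_def, Fin.val_mk]; omega) hint with h | h
    · have := congrArg Fin.val h
      simp only [Fin.val_mk] at this
      omega
    · have h2 := h.2
      simp only [Fin.val_mk] at h2
      omega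
  have hlm1v : (mx : ℕ) + 1 < n := by omega
  set lm1 : Fin n := ⟨(mx : ℕ) + 1, hlm1v⟩ with hlm1def
  have hlm1val : (lm1 : ℕ) = (mx : ℕ) + 1 := rfl
  have hmxlm1 : mx < lm1 := by simp only [Fin.lt_def]; omega
  -- descent after mx
  have hnl : ¬ IsLeadingMax σ lm1 := by
    intro h
    have := hmax' lm1 h
    simp only [Fin.le_def] at this
    omega
  have hdesc : σ lm1 < σ mx := by
    unfold IsLeadingMax IsLRMax at hnl
    push_neg at hnl
    obtain ⟨j, hj, k, hk, hkj⟩ := hnl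
    have hjlm1 : j = lm1 := by
      by_contra hne
      have hjmx : j ≤ mx := by
        have hjne : (j : ℕ) ≠ (lm1 : ℕ) := fun hh => hne (Fin.ext hh)
        simp only [Fin.le_def] at hj ⊢
        omega
      exact absurd (hmxS' j hjmx k hk) (not_lt.mpr hkj)
    subst hjlm1
    have hkmx : k ≤ mx := by
      simp only [Fin.lt_def] at hk
      simp only [Fin.le_def]
      omega
    have h1 : σ lm1 ≤ σ mx := le_trans hkj (hmono' mx k hkmx le_rfl)
    have h2 : σ lm1 ≠ σ mx := fun hh => by
      have := σ.injective hh
      rw [this] at hmxlm1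
      exact lt_irrefl _ hmxlm1
    exact lt_of_le_of_ne h1 h2
  -- cardinality
  have hSeq : {i : Fin n | IsLeadingMax σ i} = Set.Iic mx := by
    ext i
    constructor
    · intro h; exact hmax' i h
    · intro h j hj k hk
      exact hmxS' j (le_trans hj h) k hk
  have hcard : numLeading σ = (mx : ℕ) + 1 := by
    unfold numLeading
    rw [hSeq, ← Finset.coe_Iic, Set.ncard_coe_finset, Fin.card_Iic]
  ----------------------------------------------------------------
  -- CLAIM A : σ mx has value n - 1
  ----------------------------------------------------------------
  have hA : (σ mx : ℕ) = n - 1 := by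
    by_contra hAne
    set top : Fin n := ⟨n - 1, by omega⟩ with htopdef
    have htopval : (top : ℕ) = n - 1 := rfl
    set m : Fin n := σ.symm top with hmdef
    have hm : σ m = top := Equiv.apply_symm_apply σ top
    have hmval : (σ m : ℕ) = n - 1 := by rw [hm]
    have hσmxtop : σ mx < top := by
      simp only [Fin.lt_def, htopval]
      have := (σ mx).isLt
      omega
    have hmxm : mx < m := by
      rcases lt_trichotomy m mx with h | h | h
      · have h2 := hmono mx m h le_rfl
        simp only [Fin.lt_def, hmval] at h2
        have := (σ mx).isLt
        omega
      · exfalso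
        rw [h] at hmval
        exact hAne hmval
      · exact h
    have hlm1m : lm1 < m := by
      have hne : (m : ℕ) ≠ (lm1 : ℕ) := by
        intro hh
        have : m = lm1 := Fin.ext hh
        rw [this] at hmval
        simp only [Fin.lt_def] at hdesc hσmxtop
        omega
      simp only [Fin.lt_def] at hmxm ⊢
      omega
    have hmlast : (m : ℕ) < n - 1 := by
      by_contra hcon
      have hmval2 : (m : ℕ) = n - 1 := by have := m.isLt; omega
      have hint : IsIntervalAt σ ⟨0, hn0⟩ ⟨n - 2, by omega⟩ := by
        apply bottomBlock σ (by simp only [Fin.le_def, Fin.val_mk]; omega)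
        intro x y hx hy
        rw [Set.mem_Icc] at hx hy
        have hym : y = m := by
          apply Fin.ext
          have : ¬ ((y : ℕ) ≤ n - 2) := by
            intro hc
            exact hy ⟨by simp only [Fin.le_def, Fin.val_mk]; omega,
              by simp only [Fin.le_def, Fin.val_mk]; omega⟩
          have := y.isLt
          omega
        have hxm : x ≠ m := by
          intro h
          have hx2 := hx.2
          rw [h] at hx2
          simp only [Fin.le_def, Fin.val_mk] at hx2
          omega
        have hvx : (σ x : ℕ) ≠ n - 1 := by
          intro hh
          exact hxm (σ.injective (Fin.ext (by rw [hh, hmval])))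
        rw [hym]
        simp only [Fin.lt_def, hmval]
        have := (σ x).isLt
        omega
      rcases hs _ _ (by simp only [Fin.le_def, Fin.val_mk]; omega) hint with h | h
      · have := congrArg Fin.val h
        simp only [Fin.val_mk] at this
        omega
      · have h2 := h.2
        simp only [Fin.val_mk] at h2
        omega
    -- suffix maximum
    obtain ⟨r0, hr0mem, hr0max⟩ := Set.exists_max_image {r : Fin n | m < r} σ
      (Set.toFinite _) ⟨⟨n - 1, by omega⟩, by
        simp only [Set.mem_setOf_eq, Fin.lt_def, Fin.val_mk]; omega⟩
    have hr0m : m < r0 := hr0mem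
    have hr0max' : ∀ r : Fin n, m < r → σ r ≤ σ r0 := fun r hr => hr0max r hr
    have hvlow : ∀ r : Fin n, m < r → (σ r : ℕ) < n - 1 := by
      intro r hr
      have h1 : (σ r : ℕ) ≠ n - 1 := by
        intro hh
        have : r = m := σ.injective (Fin.ext (by rw [hh, hmval]))
        rw [this] at hr
        exact lt_irrefl _ hr
      have := (σ r).isLt
      omega
    -- values at positions after m are below σ lm1
    have h1a : ∀ r : Fin n, m < r → σ r < σ lm1 := by
      intro r hr
      by_contra hc
      have hrlm1 : lm1 < r := hlm1m.trans hr
      have h1 : σ lm1 < σ r := by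
        rcases lt_or_eq_of_le (not_lt.mp hc) with h | h
        · exact h
        · exact absurd (σ.injective h) (fun hh => by
            rw [hh] at hrlm1; exact lt_irrefl _ hrlm1)
      have hrtop : σ r < σ m := by
        simp only [Fin.lt_def, hmval]
        exact hvlow r hr
      have hrmx : σ r ≠ σ mx := fun hh => by
        have h4 := σ.injective hh
        rw [h4] at hr
        exact absurd (hmxm.trans hr) (lt_irrefl _)
      rcases lt_or_gt_of_ne hrmx with h | h
      · exact h3142 (contains3142 σ hmxlm1 hlm1m hr h1 h (hm ▸ hσmxtop))
      · exact h2143 (contains2143 σ hmxlm1 hlm1m hr hdesc h hrtop)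
    have hM : σ r0 < σ lm1 := h1a r0 hr0m
    -- middle values exceed suffix values
    have h1b : ∀ q r : Fin n, lm1 < q → q < m → m < r → σ r < σ q := by
      intro q r hq1 hqm hr
      by_contra hc
      have h1 : σ q < σ r := by
        rcases lt_or_eq_of_le (not_lt.mp hc) with h | h
        · exact h
        · exact absurd (σ.injective h) (fun hh => by
            rw [hh] at hqm; exact absurd (hqm.trans hr) (lt_irrefl _))
      have vv2 : σ r < σ mx := (h1a r hr).trans hdesc
      exact h3142 (contains3142 σ (hmxlm1.trans hq1) hqm hr h1 vv2 (hm ▸ hσmxtop))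
    -- leftmost position with value above σ r0
    obtain ⟨s, hsmem, hsmin⟩ := Set.exists_min_image {j : Fin n | σ r0 < σ j} id
      (Set.toFinite _) ⟨lm1, hM⟩
    have hsmem' : σ r0 < σ s := hsmem
    have hsmin' : ∀ y : Fin n, σ r0 < σ y → s ≤ y := fun y hy => hsmin y hy
    have hs_le : s ≤ lm1 := hsmin' lm1 hM
    have hs_lt_m : s < m := lt_of_le_of_lt hs_le hlm1m
    have hint : IsIntervalAt σ s m := by
      apply topBlock σ hs_lt_m.le
      intro x y hx hy
      rw [Set.mem_Icc] at hx hy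
      have hyM : σ y ≤ σ r0 := by
        rcases not_and_or.mp hy with h | h
        · have hys : y < s := not_le.mp h
          by_contra hc
          exact absurd (hsmin' y (not_le.mp hc)) (not_le.mpr hys)
        · exact hr0max' y (not_le.mp h)
      have hxM : σ r0 < σ x := by
        rcases le_or_gt x mx with hxmx | hxmx
        · exact lt_of_lt_of_le hsmem' (hmono' x s hx.1 hxmx)
        · rcases lt_trichotomy x lm1 with h | h | h
          · exfalso
            simp only [Fin.lt_def] at hxmx h
            omega
          · rw [h]; exact hM
          · rcases lt_or_eq_of_le hx.2 with h2 | h2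
            · exact h1b x r0 h h2 hr0m
            · rw [h2]
              simp only [Fin.lt_def, hmval]
              exact hvlow r0 hr0m
      exact lt_of_le_of_lt hyM hxM
    rcases hs s m hs_lt_m.le hint with h | h
    · exact absurd h (ne_of_lt hs_lt_m)
    · omega
  ----------------------------------------------------------------
  constructor
  · intro lm hlm
    have hveq : (lm : ℕ) = (mx : ℕ) := by omega
    rw [Fin.ext hveq]
    exact hA
  ----------------------------------------------------------------
  -- CLAIM B : the last value is n - 2
  ----------------------------------------------------------------
  · intro last hlast
    set v2 : Fin n := ⟨n - 2, by omega⟩ with hv2def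
    have hv2val : (v2 : ℕ) = n - 2 := rfl
    set p : Fin n := σ.symm v2 with hpdef
    have hp : σ p = v2 := Equiv.apply_symm_apply σ v2
    have hpv : (σ p : ℕ) = n - 2 := by rw [hp]
    by_contra hg
    have hplast : p ≠ last := by
      intro h
      rw [← h] at hg
      exact hg hpv
    have hpval : (p : ℕ) < n - 1 := by
      have h1 : (p : ℕ) ≠ n - 1 := fun hh => hplast (Fin.ext (by omega))
      have := p.isLt
      omega
    have hpmx : p ≠ mx := by
      intro h
      rw [h] at hpv
      omega
    have hvylow : ∀ y : Fin n, y ≠ p → y ≠ mx → (σ y : ℕ) < n - 2 := by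
      intro y hyp hymx
      have h1 : (σ y : ℕ) ≠ n - 2 := by
        intro hh
        exact hyp (σ.injective (Fin.ext (by rw [hh, hpv])))
      have h2 : (σ y : ℕ) ≠ n - 1 := by
        intro hh
        exact hymx (σ.injective (Fin.ext (by rw [hh, hA])))
      have := (σ y).isLt
      omega
    rcases lt_trichotomy p mx with hcase | hcase | hcase
    · -- p before mx : block [p, mx]
      have hint : IsIntervalAt σ p mx := by
        apply topBlock σ hcase.le
        intro x y hx hy
        rw [Set.mem_Icc] at hx hy
        have hyp' : y ≠ p := fun h => hy (by rw [h]; exact ⟨le_refl p, hcase.le⟩)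
        have hymx : y ≠ mx := fun h => hy (by rw [h]; exact ⟨hcase.le, le_refl mx⟩)
        have hvy := hvylow y hyp' hymx
        have hvx : n - 2 ≤ (σ x : ℕ) := by
          rcases eq_or_lt_of_le hx.1 with h | h
          · rw [← h, hpv]
          · have h3 := hmono x p h hx.2
            simp only [Fin.lt_def, hpv] at h3
            omega
        simp only [Fin.lt_def]
        omega
      rcases hs p mx hcase.le hint with h | h
      · exact absurd h (ne_of_lt hcase)
      · omega
    · exact absurd hcase hpmx
    · -- p after mx
      have hcasev : (mx : ℕ) < (p : ℕ) := hcase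
      rcases eq_or_lt_of_le (show (mx : ℕ) + 1 ≤ (p : ℕ) by omega) with hcase2 | hcase2
      · -- p = mx + 1 : block [mx, p]
        have hint : IsIntervalAt σ mx p := by
          apply topBlock σ hcase.le
          intro x y hx hy
          rw [Set.mem_Icc] at hx hy
          have hyp' : y ≠ p := fun h => hy (by rw [h]; exact ⟨hcase.le, le_refl p⟩)
          have hymx : y ≠ mx := fun h => hy (by rw [h]; exact ⟨le_refl mx, hcase.le⟩)
          have hvy := hvylow y hyp' hymx
          have hvx : n - 2 ≤ (σ x : ℕ) := by
            have hxor : x = mx ∨ x = p := by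
              rcases hx with ⟨h1, h2⟩
              simp only [Fin.le_def] at h1 h2
              rcases eq_or_lt_of_le h1 with h | h
              · exact Or.inl (Fin.ext h.symm)
              · exact Or.inr (Fin.ext (by omega))
            rcases hxor with h | h
            · rw [h, hA]; omega
            · rw [h, hpv]
          simp only [Fin.lt_def]
          omega
        rcases hs mx p hcase.le hint with h | h
        · exact absurd h (ne_of_lt hcase)
        · omega
      · -- main case : mx + 1 < p
        obtain ⟨r0, hr0mem, hr0max⟩ := Set.exists_max_image {r : Fin n | p < r} σ
          (Set.toFinite _) ⟨⟨n - 1, by omega⟩, by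
            simp only [Set.mem_setOf_eq, Fin.lt_def, Fin.val_mk]; omega⟩
        have hr0p : p < r0 := hr0mem
        have hr0max' : ∀ r : Fin n, p < r → σ r ≤ σ r0 := fun r hr => hr0max r hr
        have hlowlow : ∀ r : Fin n, p < r → (σ r : ℕ) < n - 2 := by
          intro r hr
          refine hvylow r (fun h => by rw [h] at hr; exact lt_irrefl _ hr)
            (fun h => by rw [h] at hr; exact absurd (hcase.trans hr) (lt_irrefl _))
        have hMval : (σ r0 : ℕ) < n - 2 := hlowlow r0 hr0p
        have hB1 : ∀ q r : Fin n, mx < q → q < p → p < r → σ r < σ q := by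
          intro q r hq1 hqp hpr
          by_contra hc
          have h1 : σ q < σ r := by
            rcases lt_or_eq_of_le (not_lt.mp hc) with h | h
            · exact h
            · exact absurd (σ.injective h) (fun hh => by
                rw [hh] at hqp; exact absurd (hqp.trans hpr) (lt_irrefl _))
          have hvr := hlowlow r hpr
          have vv2 : σ r < σ p := by simp only [Fin.lt_def, hpv]; omega
          have vv3 : σ p < σ mx := by simp only [Fin.lt_def, hpv, hA]; omega
          exact h4132 (contains4132 σ hq1 hqp hpr h1 vv2 vv3)
        obtain ⟨s, hsmem, hsmin⟩ := Set.exists_min_image {j : Fin n | σ r0 < σ j} id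
          (Set.toFinite _) ⟨mx, by
            simp only [Set.mem_setOf_eq, Fin.lt_def, hA]; omega⟩
        have hsmem' : σ r0 < σ s := hsmem
        have hsmin' : ∀ y : Fin n, σ r0 < σ y → s ≤ y := fun y hy => hsmin y hy
        have hs_le : s ≤ mx := hsmin' mx (by simp only [Fin.lt_def, hA]; omega)
        have hs_lt_p : s < p := lt_of_le_of_lt hs_le hcase
        have hint : IsIntervalAt σ s p := by
          apply topBlock σ hs_lt_p.le
          intro x y hx hy
          rw [Set.mem_Icc] at hx hy
          have hyM : σ y ≤ σ r0 := by
            rcases not_and_or.mp hy with h | h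
            · have hys : y < s := not_le.mp h
              by_contra hc
              exact absurd (hsmin' y (not_le.mp hc)) (not_le.mpr hys)
            · exact hr0max' y (not_le.mp h)
          have hxM : σ r0 < σ x := by
            rcases le_or_gt x mx with hxmx | hxmx
            · exact lt_of_lt_of_le hsmem' (hmono' x s hx.1 hxmx)
            · rcases lt_or_eq_of_le hx.2 with h2 | h2
              · exact hB1 x r0 hxmx h2 hr0p
              · rw [h2]
                simp only [Fin.lt_def, hpv]
                omega
          exact lt_of_le_of_lt hyM hxM
        rcases hs s p hs_lt_p.le hint with h | h
        · exact absurd h (ne_of_lt hs_lt_p)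
        · omega
end

section
/- If σ is a simple permutation and both 3142 and 263514 are simple patterns, then for any nonempty permutations ρ⁽¹⁾,…,ρ⁽ⁿ⁾: the inflation σ[ρ⁽¹⁾,…,ρ⁽ⁿ⁾] contains 3142 (respectively 263514) if and only if σ contains 3142 (respectively 263514) or some ρ⁽ⁱ⁾ contains it. In particular, if σ and all ρ⁽ⁱ⁾ avoid 3142 and 263514, so does the inflation. -/
/-- A pattern `τ` occurs in the word `w`. -/
def ContainsL {k : ℕ} (τ : Fin k → Fin k) (w : List ℕ) : Prop :=
  ∃ f : Fin k → Fin w.length, StrictMono f ∧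
    ∀ i j : Fin k, τ i < τ j ↔ w.get (f i) < w.get (f j)

def AvoidsL {k : ℕ} (τ : Fin k → Fin k) (w : List ℕ) : Prop := ¬ ContainsL τ w

/-- The word of a permutation. -/
def toWord {n : ℕ} (π : Equiv.Perm (Fin n)) : List ℕ := List.ofFn fun p => (π p : ℕ)

/-- Total size of the values consumed by blocks whose image under `σ` is below `σ i`. -/
def valOffset {n : ℕ} (σ : Equiv.Perm (Fin n)) (m : Fin n → ℕ) (i : Fin n) : ℕ :=
  ∑ i' ∈ Finset.univ.filter (fun i' => σ i' < σ i), m i'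

/-- The inflation `σ[ρ 0, …, ρ (n-1)]`, as a word: each entry `σ i` is replaced by a
block order-isomorphic to `ρ i`, blocks being arranged relative to each other as in `σ`. -/
def inflation {n : ℕ} (σ : Equiv.Perm (Fin n)) (m : Fin n → ℕ)
    (ρ : ∀ i, Equiv.Perm (Fin (m i))) : List ℕ :=
  (List.ofFn fun i : Fin n =>
    List.ofFn fun r : Fin (m i) => valOffset σ m i + (ρ i r : ℕ)).flatten

/-!
An occurrence of a pattern `τ` in `σ[ρ₁, …, ρₙ]` sends each entry of `τ` to the block containing
it. This map is monotone, and entries in different blocks compare as the corresponding entries of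
`σ`. Hence the entries sent to one block are consecutive and every other entry lies above all of
them or below all of them: they form an interval of `τ`. If `τ` is simple, either every block
receives at most one entry, giving an occurrence of `τ` in `σ`, or a single block receives all of
them, giving an occurrence in some `ρᵢ`. Conversely, occurrences in `σ` (through the first entry of
each block) and in a block lift to the inflation.
-/

open Finset Function

section BlockOffset

variable {ι α : Type*} [Fintype ι] [LinearOrder α]

/-- `blockOffset σ m i` is the first value of block `i` of the inflation (it is `valOffset σ m i`),
and `blockOffset id m i` its first position. -/
def blockOffset (g : ι → α) (m : ι → ℕ) (i : ι) : ℕ := ∑ j with g j < g i, m j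

theorem blockOffset_add_le {g : ι → α} (m : ι → ℕ) {i j : ι} (h : g i < g j) :
    blockOffset g m i + m i ≤ blockOffset g m j := by
  classical
  rw [blockOffset, add_comm, ← sum_insert (by simp)]
  refine sum_le_sum_of_subset fun x hx => ?_
  simp only [mem_insert, mem_filter, mem_univ, true_and] at hx ⊢
  rcases hx with rfl | hx
  exacts [h, hx.trans h]

theorem blockOffset_add_lt {g : ι → α} (m : ι → ℕ) {i j : ι} (h : g i < g j) {x : ℕ}
    (hx : x < m i) (y : ℕ) : blockOffset g m i + x < blockOffset g m j + y := by
  have := blockOffset_add_le m h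
  omega

theorem blockOffset_add_lt_iff {g : ι → α} (hg : Injective g) (m : ι → ℕ) {i j : ι}
    (hij : i ≠ j) {x y : ℕ} (hx : x < m i) (hy : y < m j) :
    blockOffset g m i + x < blockOffset g m j + y ↔ g i < g j := by
  refine ⟨fun h => ?_, fun h => blockOffset_add_lt m h hx y⟩
  by_contra hn
  have := blockOffset_add_lt m ((not_lt.1 hn).lt_of_ne (hg.ne hij.symm)) hy x
  omega

end BlockOffset

namespace List

variable {α : Type*}

theorem sum_take_add_lt_length_flatten (L : List (List α)) {j r : ℕ} (hj : j < L.length)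
    (hr : r < L[j].length) : ((L.map length).take j).sum + r < L.flatten.length := by
  have := length_drop (l := L.flatten) (i := ((L.map length).take j).sum)
  rw [drop_sum_flatten, drop_eq_getElem_cons hj, flatten_cons, length_append] at this
  omega

theorem getElem_flatten_sum_take_add (L : List (List α)) {j r : ℕ} (hj : j < L.length)
    (hr : r < L[j].length) (h : ((L.map length).take j).sum + r < L.flatten.length) :
    L.flatten[((L.map length).take j).sum + r] = L[j][r] := by
  rw [← Option.some_inj, ← getElem?_eq_getElem, ← getElem?_eq_getElem, ← getElem?_drop,
    drop_sum_flatten, drop_eq_getElem_cons hj, flatten_cons, getElem?_append_left hr]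

theorem exists_eq_sum_take_add_of_lt_length_flatten :
    ∀ (L : List (List α)) {p : ℕ}, p < L.flatten.length →
      ∃ j, ∃ hj : j < L.length, ∃ r < L[j].length, p = ((L.map length).take j).sum + r
  | [], p, hp => by simp at hp
  | a :: L, p, hp => by
      by_cases h : p < a.length
      · exact ⟨0, by simp, p, by simpa using h, by simp⟩
      · rw [flatten_cons, length_append] at hp
        obtain ⟨j, hj, r, hr, hp⟩ :=
          exists_eq_sum_take_add_of_lt_length_flatten L (p := p - a.length) (by omega)
        refine ⟨j + 1, by simpa using hj, r, by simpa using hr, ?_⟩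
        simp only [map_cons, take_succ_cons, sum_cons]
        omega

end List

section Inflation

variable {n : ℕ} (σ : Equiv.Perm (Fin n)) (m : Fin n → ℕ) (ρ : ∀ i, Equiv.Perm (Fin (m i)))

def inflationBlocks : List (List ℕ) :=
  List.ofFn fun i : Fin n => List.ofFn fun r : Fin (m i) => valOffset σ m i + (ρ i r : ℕ)

theorem inflation_eq_flatten : inflation σ m ρ = (inflationBlocks σ m ρ).flatten := rfl

theorem length_inflationBlocks : (inflationBlocks σ m ρ).length = n := List.length_ofFn

theorem getElem_inflationBlocks (i : Fin n) (h : (i : ℕ) < (inflationBlocks σ m ρ).length) :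
    (inflationBlocks σ m ρ)[(i : ℕ)] =
      List.ofFn fun r : Fin (m i) => valOffset σ m i + (ρ i r : ℕ) := by
  simp [inflationBlocks]

theorem sum_take_map_length_inflationBlocks (i : Fin n) :
    (((inflationBlocks σ m ρ).map List.length).take i).sum = blockOffset id m i := by
  simp only [inflationBlocks, List.map_ofFn, Function.comp_def, List.length_ofFn,
    List.sum_take_ofFn, blockOffset, id, Fin.val_fin_lt]

theorem blockOffset_add_lt_length_inflation (i : Fin n) {r : ℕ} (hr : r < m i) :
    blockOffset id m i + r < (inflation σ m ρ).length := by
  have hi : (i : ℕ) < (inflationBlocks σ m ρ).length := by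
    rw [length_inflationBlocks]; exact i.isLt
  have := (inflationBlocks σ m ρ).sum_take_add_lt_length_flatten hi
    (r := r) (by simpa [getElem_inflationBlocks] using hr)
  rwa [sum_take_map_length_inflationBlocks] at this

theorem get_inflation {p : Fin (inflation σ m ρ).length} {i : Fin n} {r : ℕ} (hr : r < m i)
    (hp : (p : ℕ) = blockOffset id m i + r) :
    (inflation σ m ρ).get p = valOffset σ m i + (ρ i ⟨r, hr⟩ : ℕ) := by
  have hi : (i : ℕ) < (inflationBlocks σ m ρ).length := by
    rw [length_inflationBlocks]; exact i.isLt
  have hr' : r < (inflationBlocks σ m ρ)[(i : ℕ)].length := by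
    simpa [getElem_inflationBlocks] using hr
  have hget := (inflationBlocks σ m ρ).getElem_flatten_sum_take_add hi hr'
    (by rw [sum_take_map_length_inflationBlocks, ← inflation_eq_flatten]
        exact blockOffset_add_lt_length_inflation σ m ρ i hr)
  simp only [sum_take_map_length_inflationBlocks, getElem_inflationBlocks,
    List.getElem_ofFn] at hget
  obtain ⟨p, _⟩ := p
  subst hp
  exact hget

theorem exists_eq_blockOffset_add (p : Fin (inflation σ m ρ).length) :
    ∃ (i : Fin n) (r : ℕ), r < m i ∧ (p : ℕ) = blockOffset id m i + r := by
  obtain ⟨j, hj, r, hr, hp⟩ :=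
    (inflationBlocks σ m ρ).exists_eq_sum_take_add_of_lt_length_flatten p.isLt
  have hj' : j < n := by rwa [length_inflationBlocks] at hj
  refine ⟨⟨j, hj'⟩, r, by simpa [inflationBlocks] using hr, ?_⟩
  rwa [← sum_take_map_length_inflationBlocks σ m ρ ⟨j, hj'⟩]

end Inflation

/-- For a permutation, the positions `[a, b]` carry an interval of values iff every other entry
lies above all of them or below all of them. -/
def IsSimplePattern {k : ℕ} (τ : Fin k → Fin k) : Prop :=
  ∀ a b : Fin k, a ≤ b →
    (∀ t, t < a ∨ b < t →
      (∀ s, a ≤ s → s ≤ b → τ t < τ s) ∨ (∀ s, a ≤ s → s ≤ b → τ s < τ t)) →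
    a = b ∨ ((a : ℕ) = 0 ∧ (b : ℕ) = k - 1)

theorem isSimplePattern_3142 : IsSimplePattern pat3142 := by
  unfold IsSimplePattern; decide

theorem isSimplePattern_263514 : IsSimplePattern pat263514 := by
  unfold IsSimplePattern; decide

theorem IsSimplePattern.forall_eq_of_monotone {k : ℕ} {τ : Fin k → Fin k}
    (hτ : IsSimplePattern τ) {ι γ : Type*} [LinearOrder ι] [LinearOrder γ] {b : Fin k → ι}
    (hb : Monotone b) {g : ι → γ} (hg : Injective g)
    (hsep : ∀ s t, b s ≠ b t → (τ s < τ t ↔ g (b s) < g (b t)))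
    {s t : Fin k} (hst : s ≠ t) (hbst : b s = b t) (u : Fin k) : b u = b s := by
  classical
  set P := univ.filter fun v => b v = b s
  have hsP : s ∈ P := by simp [P]
  have htP : t ∈ P := by simp [P, hbst]
  -- By monotonicity the fibre `P` of `b` through `s` is the interval `[A, B]`, and `hsep` makes it
  -- an interval of `τ`.
  set A := P.min' ⟨s, hsP⟩
  set B := P.max' ⟨s, hsP⟩
  have hA : b A = b s := (mem_filter.1 (P.min'_mem _)).2
  have hB : b B = b s := (mem_filter.1 (P.max'_mem _)).2
  have hmid : ∀ v, A ≤ v → v ≤ B → b v = b s := fun v hAv hvB =>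
    le_antisymm (hB ▸ hb hvB) (hA ▸ hb hAv)
  have hout : ∀ v, v < A ∨ B < v → b v ≠ b s := by
    rintro v (hv | hv) hvs
    · exact (P.min'_le v (by simp [P, hvs])).not_gt hv
    · exact (P.le_max' v (by simp [P, hvs])).not_gt hv
  have hAB : A = B ∨ ((A : ℕ) = 0 ∧ (B : ℕ) = k - 1) := by
    refine hτ A B (P.min'_le _ (P.max'_mem _)) fun v hv => ?_
    rcases (hg.ne (hout v hv)).lt_or_gt with hlt | hgt
    · left
      intro w hAw hwB
      rw [hsep v w (hmid w hAw hwB ▸ hout v hv), hmid w hAw hwB]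
      exact hlt
    · right
      intro w hAw hwB
      rw [hsep w v (hmid w hAw hwB ▸ (hout v hv).symm), hmid w hAw hwB]
      exact hgt
  rcases hAB with hAB | ⟨hA0, hBk⟩
  · have hsA : s = A := le_antisymm (hAB ▸ P.le_max' s hsP) (P.min'_le s hsP)
    have htA : t = A := le_antisymm (hAB ▸ P.le_max' t htP) (P.min'_le t htP)
    exact absurd (hsA.trans htA.symm) hst
  · exact hmid u (Fin.le_def.2 (by omega)) (Fin.le_def.2 (by omega))

section Containment

variable {k n : ℕ} {τ : Fin k → Fin k} (σ : Equiv.Perm (Fin n)) (m : Fin n → ℕ)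
  (ρ : ∀ i, Equiv.Perm (Fin (m i)))

theorem Contains.containsL_inflation (hm : ∀ i, 0 < m i) (h : Contains τ σ) :
    ContainsL τ (inflation σ m ρ) := by
  obtain ⟨g, hg, hgτ⟩ := h
  refine ⟨fun s => ⟨blockOffset id m (g s) + 0,
    blockOffset_add_lt_length_inflation σ m ρ (g s) (hm _)⟩, fun s t hst => ?_, fun s t => ?_⟩
  · exact Fin.mk_lt_mk.2 (blockOffset_add_lt m (hg hst) (hm _) 0)
  · rw [get_inflation σ m ρ (hm _) rfl, get_inflation σ m ρ (hm _) rfl, hgτ]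
    rcases eq_or_ne s t with rfl | hst
    · simp
    · exact (blockOffset_add_lt_iff σ.injective m (hg.injective.ne hst) (Fin.is_lt _)
        (Fin.is_lt _)).symm

theorem Contains.containsL_inflation_of_block (i : Fin n) (h : Contains τ (ρ i)) :
    ContainsL τ (inflation σ m ρ) := by
  obtain ⟨g, hg, hgτ⟩ := h
  refine ⟨fun s => ⟨blockOffset id m i + g s,
    blockOffset_add_lt_length_inflation σ m ρ i (g s).isLt⟩, fun s t hst => ?_, fun s t => ?_⟩
  · exact Fin.mk_lt_mk.2 (Nat.add_lt_add_left (hg hst) _)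
  · rw [get_inflation σ m ρ (g s).isLt rfl, get_inflation σ m ρ (g t).isLt rfl, hgτ,
      Nat.add_lt_add_iff_left]
    rfl

theorem IsSimplePattern.contains_of_containsL_inflation (hτ : IsSimplePattern τ)
    (h : ContainsL τ (inflation σ m ρ)) : Contains τ σ ∨ ∃ i, Contains τ (ρ i) := by
  obtain ⟨f, hf, hfτ⟩ := h
  choose b r hr hpos using fun s => exists_eq_blockOffset_add σ m ρ (f s)
  have hb : Monotone b := fun s t hst => by
    by_contra hlt
    have hts := blockOffset_add_lt (g := id) m (not_le.1 hlt) (hr t) (r s)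
    have hst' := hf.monotone hst
    rw [Fin.le_def, hpos, hpos] at hst'
    omega
  have hsep : ∀ s t, b s ≠ b t → (τ s < τ t ↔ σ (b s) < σ (b t)) := fun s t hst => by
    rw [hfτ, get_inflation σ m ρ (hr s) (hpos s), get_inflation σ m ρ (hr t) (hpos t)]
    exact blockOffset_add_lt_iff σ.injective m hst (Fin.is_lt _) (Fin.is_lt _)
  by_cases hinj : Injective b
  · refine .inl ⟨b, hb.strictMono_of_injective hinj, fun s t => ?_⟩
    rcases eq_or_ne s t with rfl | hst
    · simp
    · exact hsep s t (hinj.ne hst)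
  obtain ⟨s, t, hbst, hst⟩ := not_injective_iff.1 hinj
  have hconst : ∀ u, b u = b s := hτ.forall_eq_of_monotone hb σ.injective hsep hst hbst
  have hpos' : ∀ u, (f u : ℕ) = blockOffset id m (b s) + r u := fun u => hconst u ▸ hpos u
  have hr' : ∀ u, r u < m (b s) := fun u => hconst u ▸ hr u
  refine .inr ⟨b s, fun u => ⟨r u, hr' u⟩, fun u v huv => ?_, fun u v => ?_⟩
  · have hfuv := hf huv
    rw [Fin.lt_def, hpos', hpos'] at hfuv
    exact Fin.mk_lt_mk.2 (by omega)
  · rw [hfτ, get_inflation σ m ρ (hr' u) (hpos' u), get_inflation σ m ρ (hr' v) (hpos' v),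
      Nat.add_lt_add_iff_left]
    rfl

theorem IsSimplePattern.containsL_inflation_iff (hτ : IsSimplePattern τ) (hm : ∀ i, 0 < m i) :
    ContainsL τ (inflation σ m ρ) ↔ Contains τ σ ∨ ∃ i, Contains τ (ρ i) := by
  refine ⟨hτ.contains_of_containsL_inflation σ m ρ, ?_⟩
  rintro (h | ⟨i, h⟩)
  exacts [h.containsL_inflation σ m ρ hm, h.containsL_inflation_of_block σ m ρ i]

end Containment

theorem stmt13_general {n : ℕ} (σ : Equiv.Perm (Fin n))
    (m : Fin n → ℕ) (hm : ∀ i, 0 < m i) (ρ : ∀ i, Equiv.Perm (Fin (m i))) :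
    (ContainsL pat3142 (inflation σ m ρ) ↔
      Contains pat3142 σ ∨ ∃ i, Contains pat3142 (ρ i)) ∧
    (ContainsL pat263514 (inflation σ m ρ) ↔
      Contains pat263514 σ ∨ ∃ i, Contains pat263514 (ρ i)) ∧
    ((Avoids pat3142 σ ∧ Avoids pat263514 σ ∧
        ∀ i, Avoids pat3142 (ρ i) ∧ Avoids pat263514 (ρ i)) →
      AvoidsL pat3142 (inflation σ m ρ) ∧ AvoidsL pat263514 (inflation σ m ρ)) := by
  have h3142 := isSimplePattern_3142.containsL_inflation_iff σ m ρ hm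
  have h263514 := isSimplePattern_263514.containsL_inflation_iff σ m ρ hm
  refine ⟨h3142, h263514, fun ⟨hσ3142, hσ263514, hρ⟩ => ⟨fun h => ?_, fun h => ?_⟩⟩
  · exact (h3142.1 h).elim hσ3142 fun ⟨i, hi⟩ => (hρ i).1 hi
  · exact (h263514.1 h).elim hσ263514 fun ⟨i, hi⟩ => (hρ i).2 hi

theorem stmt13 {n : ℕ} (σ : Equiv.Perm (Fin n)) (hsimple : IsSimple σ)
    (m : Fin n → ℕ) (hm : ∀ i, 0 < m i) (ρ : ∀ i, Equiv.Perm (Fin (m i))) :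
    (ContainsL pat3142 (inflation σ m ρ) ↔
      Contains pat3142 σ ∨ ∃ i, Contains pat3142 (ρ i)) ∧
    (ContainsL pat263514 (inflation σ m ρ) ↔
      Contains pat263514 σ ∨ ∃ i, Contains pat263514 (ρ i)) ∧
    ((Avoids pat3142 σ ∧ Avoids pat263514 σ ∧
        ∀ i, Avoids pat3142 (ρ i) ∧ Avoids pat263514 (ρ i)) →
      AvoidsL pat3142 (inflation σ m ρ) ∧ AvoidsL pat263514 (inflation σ m ρ)) :=
  stmt13_general σ m hm ρ
end

section
/- Let t(x) = (1 + x − √(1 − 6x + x²))/(4x) (the generating function of the little Schröder numbers) and B(x) = (3 − x − √(1 − 6x + x²))/2 (the generating function of the large Schröder numbers). Then B(x) = 1/(1 − x·t(x)), and t satisfies t²x + (t−1)x·C* − (t−1) = 0 where C* = C(x/(1 − tx)) and C(y) = (1 − √(1−4y))/(2y) is the Catalan generating function. -/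
/-!
Write `s = √(1 - 6x + x²)`, which is real for `x ≤ 3 - 2√2`. Then `1 - x t = (3 - x + s)/4`, and
`(3 - x - s)(3 - x + s) = (3 - x)² - s² = 8` gives `B (1 - x t) = 1`. For the Catalan part, the
argument `y = x/(1 - t x) = 4x/(3 - x + s)` makes `1 - 4y` the perfect square `(x + s)²`, so the
square root in `C(y)` disappears and the second identity becomes a polynomial identity in `x` and
`s` modulo `s² = 1 - 6x + x²`.
-/

/-- `B(x) = (3 - x - √(1 - 6x + x²))/2`, the large Schröder generating function. -/
noncomputable def Bfun (x : ℝ) : ℝ := (3 - x - Real.sqrt (1 - 6 * x + x ^ 2)) / 2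

/-- `t(x) = (1 + x - √(1 - 6x + x²))/(4x)`, the little Schröder generating function. -/
noncomputable def tfun (x : ℝ) : ℝ := (1 + x - Real.sqrt (1 - 6 * x + x ^ 2)) / (4 * x)

/-- The Catalan generating function `C(y) = (1 - √(1-4y))/(2y)`. -/
noncomputable def Cfun (y : ℝ) : ℝ := (1 - Real.sqrt (1 - 4 * y)) / (2 * y)

open Real

lemma one_sub_six_mul_add_sq_nonneg {x : ℝ} (hx : x ≤ 3 - 2 * √2) : 0 ≤ 1 - 6 * x + x ^ 2 := by
  have h2 : √2 ^ 2 = 2 := sq_sqrt zero_le_two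
  have hfactor : 1 - 6 * x + x ^ 2 = (3 - 2 * √2 - x) * (3 + 2 * √2 - x) := by
    linear_combination 4 * h2
  rw [hfactor]
  exact mul_nonneg (by linarith) (by linarith [sqrt_nonneg 2])

lemma Cfun_eq_of_one_sub_four_mul_eq_sq {y u : ℝ} (hu : 0 ≤ u) (h : 1 - 4 * y = u ^ 2) :
    Cfun y = (1 - u) / (2 * y) := by
  rw [Cfun, h, sqrt_sq hu]

section Schroeder

variable {x : ℝ}

lemma one_sub_tfun_mul_self (hx : x ≠ 0) :
    1 - tfun x * x = (3 - x + √(1 - 6 * x + x ^ 2)) / 4 := by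
  rw [tfun]
  field_simp
  ring

lemma three_sub_add_sqrt_pos (hx : x ≤ 3 - 2 * √2) : 0 < 3 - x + √(1 - 6 * x + x ^ 2) := by
  have h2 : 1 ≤ √2 := one_le_sqrt.mpr one_le_two
  linarith [sqrt_nonneg (1 - 6 * x + x ^ 2)]

lemma Bfun_mul_one_sub_mul_tfun (hx : x ≤ 3 - 2 * √2) (hx0 : x ≠ 0) :
    Bfun x * (1 - x * tfun x) = 1 := by
  rw [mul_comm x, one_sub_tfun_mul_self hx0, Bfun]
  linear_combination (-1 / 8) * sq_sqrt (one_sub_six_mul_add_sq_nonneg hx)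

lemma one_sub_four_mul_div_one_sub_tfun_mul_self (hx : x ≤ 3 - 2 * √2) (hx0 : x ≠ 0) :
    1 - 4 * (x / (1 - tfun x * x)) = (x + √(1 - 6 * x + x ^ 2)) ^ 2 := by
  have hpos := three_sub_add_sqrt_pos hx
  have hs2 := sq_sqrt (one_sub_six_mul_add_sq_nonneg hx)
  rw [one_sub_tfun_mul_self hx0]
  generalize √(1 - 6 * x + x ^ 2) = s at hpos hs2 ⊢
  field_simp
  linear_combination (-(3 + x + s)) * hs2

end Schroeder

theorem stmt16 (x : ℝ) (h0 : 0 < x) (h1 : x < 3 - 2 * Real.sqrt 2) :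
    Bfun x = 1 / (1 - x * tfun x) ∧
    tfun x ^ 2 * x + (tfun x - 1) * x * Cfun (x / (1 - tfun x * x)) - (tfun x - 1) = 0 := by
  refine ⟨eq_one_div_of_mul_eq_one_left (Bfun_mul_one_sub_mul_tfun h1.le h0.ne'), ?_⟩
  have hpos := three_sub_add_sqrt_pos h1.le
  have hs2 := sq_sqrt (one_sub_six_mul_add_sq_nonneg h1.le)
  rw [Cfun_eq_of_one_sub_four_mul_eq_sq (by positivity)
    (one_sub_four_mul_div_one_sub_tfun_mul_self h1.le h0.ne'), one_sub_tfun_mul_self h0.ne', tfun]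
  generalize √(1 - 6 * x + x ^ 2) = s at hpos hs2 ⊢
  field_simp
  linear_combination (3 + 3 * x + s) * hs2
end
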